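/- arXiv:2512.17297 — 3 statements merged into one kernel-verified Lean document; each statement's English description precedes it below -/
import Mathlib

section
/- For integers m, n ≥ 0, the kernel of the composition M_m ∘ M_n of classical (univariate) Bernstein–Durrmeyer operators has the representation K_{m,n}(x,y) = ((m+1)!·(n+1)!/(m+n+1)!) · Σ_{k=0}^{min{m,n}} C(m,k) · C(n,k) · Σ_{ℓ=0}^{k} p_{k,ℓ}(x) · p_{k,ℓ}(y) for all x, y ∈ [0,1]. -/
open MeasureTheory

/-- Bernstein basis polynomial `p_{n,k}(x) = C(n,k) x^k (1-x)^(n-k)` on `[0,1]`. -/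
noncomputable def bernsteinBasis (n k : ℕ) (x : ℝ) : ℝ :=
  (n.choose k : ℝ) * x ^ k * (1 - x) ^ (n - k)

/-- Kernel of the classical Bernstein–Durrmeyer operator `M_n`. -/
noncomputable def durrmeyerKernel (n : ℕ) (x y : ℝ) : ℝ :=
  (n + 1 : ℝ) * ∑ k ∈ Finset.range (n + 1), bernsteinBasis n k x * bernsteinBasis n k y

/-- Kernel of the composition `M_m ∘ M_n`. -/
noncomputable def durrmeyerKernelComp (m n : ℕ) (x y : ℝ) : ℝ :=
  ∫ t in (0:ℝ)..1, durrmeyerKernel m x t * durrmeyerKernel n t y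

section Aux

open Finset intervalIntegral

lemma beta_nat : ∀ (b a : ℕ), (∫ t in (0:ℝ)..1, t ^ a * (1 - t) ^ b)
    = (a.factorial : ℝ) * (b.factorial : ℝ) / ((a + b + 1).factorial : ℝ) := by
  intro b
  induction b with
  | zero =>
    intro a
    simp [integral_pow, Nat.factorial_succ]
    rw [eq_div_iff (by positivity)]
    field_simp
  | succ b ih =>
    intro a
    have key : (∫ t in (0:ℝ)..1, (1 - t) ^ (b+1) * t ^ a)
        = ((b:ℝ)+1) / ((a:ℝ)+1) * ∫ t in (0:ℝ)..1, t ^ (a+1) * (1 - t) ^ b := by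
      have := integral_mul_deriv_eq_deriv_mul
        (u := fun t : ℝ => (1 - t) ^ (b+1)) (u' := fun t : ℝ => -((b:ℝ)+1) * (1 - t) ^ b)
        (v := fun t : ℝ => t ^ (a+1) / ((a:ℝ)+1)) (v' := fun t : ℝ => t ^ a)
        (a := (0:ℝ)) (b := 1)
        (fun t _ => by
          have h1 : HasDerivAt (fun t : ℝ => 1 - t) (-1) t := by
            simpa using (hasDerivAt_id t).const_sub (1:ℝ)
          have := h1.fun_pow (b+1)
          have : HasDerivAt (fun t : ℝ => (1 - t) ^ (b+1)) (-((↑b + 1) * (1 - t) ^ b)) t := by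
            simpa using this
          refine this.congr_deriv ?_
          push_cast
          ring)
        (fun t _ => by
          have h1 : HasDerivAt (fun t : ℝ => t ^ (a+1)) (((a:ℝ)+1) * t ^ a) t := by
            simpa using hasDerivAt_pow (a+1) t
          have h2 := h1.div_const ((a:ℝ)+1)
          have ha : ((a:ℝ)+1) ≠ 0 := by positivity
          simpa [mul_div_assoc, mul_comm, ha, mul_div_cancel_left₀] using h2)
        (by apply Continuous.intervalIntegrable; continuity)
        (by apply Continuous.intervalIntegrable; continuity)
      rw [this]
      have ha : ((a:ℝ)+1) ≠ 0 := by positivity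
      norm_num
      rw [← intervalIntegral.integral_neg, ← intervalIntegral.integral_const_mul]
      congr 1
      ext t
      field_simp
      ring
    have h2 : (∫ t in (0:ℝ)..1, t ^ a * (1 - t) ^ (b+1))
        = (∫ t in (0:ℝ)..1, (1 - t) ^ (b+1) * t ^ a) := by
      congr 1; ext t; ring
    rw [h2, key, ih (a+1)]
    have h3 : a + 1 + b + 1 = a + (b+1) + 1 := by omega
    rw [h3]
    rw [Nat.factorial_succ a, Nat.factorial_succ b]
    have hf : ((a + (b+1) + 1).factorial : ℝ) ≠ 0 := by positivity
    push_cast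
    field_simp

lemma cmc (p a b : ℕ) : p.choose a * (p - a).choose b = p.choose b * (p - b).choose a := by
  rcases le_or_gt (a + b) p with h | h
  · have h1 := Nat.choose_mul (n := p) (k := a + b) (s := a) (Nat.le_add_right a b)
    have h2 := Nat.choose_mul (n := p) (k := a + b) (s := b) (Nat.le_add_left b a)
    rw [Nat.add_sub_cancel_left] at h1
    rw [Nat.add_sub_cancel] at h2
    rw [← h1, ← h2, Nat.choose_symm_add]
  · have l1 : p.choose a * (p - a).choose b = 0 := by
      rcases le_or_gt a p with ha | ha
      · have : p - a < b := by omega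
        rw [Nat.choose_eq_zero_of_lt this, mul_zero]
      · rw [Nat.choose_eq_zero_of_lt ha, zero_mul]
    have l2 : p.choose b * (p - b).choose a = 0 := by
      rcases le_or_gt b p with hb | hb
      · have : p - b < a := by omega
        rw [Nat.choose_eq_zero_of_lt this, mul_zero]
      · rw [Nat.choose_eq_zero_of_lt hb, zero_mul]
    rw [l1, l2]

lemma vand (p q N : ℕ) (h : q ≤ N) :
    ∑ a ∈ range (N + 1), p.choose a * q.choose a = (p + q).choose q := by
  rw [Nat.add_choose_eq, Finset.Nat.sum_antidiagonal_eq_sum_range_succ_mk]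
  rw [← Finset.sum_subset (Finset.range_subset_range.2 (by omega) :
      range (q+1) ⊆ range (N+1))]
  · apply Finset.sum_congr rfl
    intro a ha
    rw [Finset.mem_range] at ha
    rw [Nat.choose_symm (by omega)]
  · intro a _ ha
    rw [Finset.mem_range, not_lt] at ha
    rw [Nat.choose_eq_zero_of_lt (by omega : q < a), mul_zero]

lemma vand2 (p q N : ℕ) (h : min p q ≤ N) :
    ∑ a ∈ range (N + 1), p.choose a * q.choose a = (p + q).choose q := by
  have key : ∀ M : ℕ, min p q ≤ M →
      ∑ a ∈ range (M + 1), p.choose a * q.choose a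
        = ∑ a ∈ range (min p q + 1), p.choose a * q.choose a := by
    intro M hM
    rw [← Finset.sum_subset (Finset.range_subset_range.2 (by omega) :
        range (min p q + 1) ⊆ range (M + 1))]
    intro a _ ha
    rw [Finset.mem_range, not_lt] at ha
    rcases le_or_gt a p with hap | hap
    · have : q < a := by omega
      rw [Nat.choose_eq_zero_of_lt this, mul_zero]
    · rw [Nat.choose_eq_zero_of_lt hap, zero_mul]
  rw [key N h, ← key q (by omega), vand p q q le_rfl]

lemma star (m n i j : ℕ) (hi : i ≤ m) (hj : j ≤ n) :
    ∑ k ∈ range (min m n + 1), ∑ ℓ ∈ range (k + 1),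
      (if ℓ ≤ i ∧ ℓ ≤ j then
        m.choose k * n.choose k * (k.choose ℓ * k.choose ℓ)
          * ((m - k).choose (i - ℓ) * (n - k).choose (j - ℓ))
      else 0)
    = m.choose i * n.choose j * ((i + j).choose i * (m + n - i - j).choose (m - i)) := by
  have stepA : ∀ k ∈ range (min m n + 1),
      ∑ ℓ ∈ range (k + 1),
        (if ℓ ≤ i ∧ ℓ ≤ j then
          m.choose k * n.choose k * (k.choose ℓ * k.choose ℓ)
            * ((m - k).choose (i - ℓ) * (n - k).choose (j - ℓ)) else 0)
      = ∑ ℓ ∈ range (min m n + 1),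
        (if ℓ ≤ i ∧ ℓ ≤ j then
          m.choose k * n.choose k * (k.choose ℓ * k.choose ℓ)
            * ((m - k).choose (i - ℓ) * (n - k).choose (j - ℓ)) else 0) := by
    intro k hk
    rw [Finset.mem_range] at hk
    rw [← Finset.sum_subset (Finset.range_subset_range.2 (by omega) :
        range (k + 1) ⊆ range (min m n + 1))]
    intro ℓ _ hℓ
    rw [Finset.mem_range, not_lt] at hℓ
    have : k.choose ℓ = 0 := Nat.choose_eq_zero_of_lt (by omega)
    split_ifs <;> simp [this]
  rw [Finset.sum_congr rfl stepA, Finset.sum_comm]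
  have stepC : ∀ ℓ ∈ range (min m n + 1),
      ∑ k ∈ range (min m n + 1),
        (if ℓ ≤ i ∧ ℓ ≤ j then
          m.choose k * n.choose k * (k.choose ℓ * k.choose ℓ)
            * ((m - k).choose (i - ℓ) * (n - k).choose (j - ℓ)) else 0)
      = (if ℓ ≤ i ∧ ℓ ≤ j then
          (m.choose i * i.choose ℓ) * (n.choose j * j.choose ℓ)
            * (m + n - i - j).choose (m - i) else 0) := by
    intro ℓ hℓ
    rw [Finset.mem_range] at hℓ
    split_ifs with hguard
    · obtain ⟨hℓi, hℓj⟩ := hguard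
      rw [Finset.range_eq_Ico]
      rw [← Finset.sum_subset (Finset.Ico_subset_Ico (Nat.zero_le ℓ) le_rfl :
            Finset.Ico ℓ (min m n + 1) ⊆ Finset.Ico 0 (min m n + 1))]
      · rw [Finset.sum_Ico_eq_sum_range]
        have hsum : ∀ a ∈ range (min m n + 1 - ℓ),
            m.choose (ℓ + a) * n.choose (ℓ + a)
              * ((ℓ + a).choose ℓ * (ℓ + a).choose ℓ)
              * ((m - (ℓ + a)).choose (i - ℓ) * (n - (ℓ + a)).choose (j - ℓ))
            = (m.choose ℓ * (m - ℓ).choose (i - ℓ)) * (n.choose ℓ * (n - ℓ).choose (j - ℓ))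
              * ((m - i).choose a * ((n - j).choose a)) := by
          intro a ha
          rw [Finset.mem_range] at ha
          have h1 : m.choose (ℓ + a) * (ℓ + a).choose ℓ
              = m.choose ℓ * (m - ℓ).choose a := by
            rw [Nat.choose_mul (n := m) (k := ℓ + a) (s := ℓ) (by omega), Nat.add_sub_cancel_left]
          have h2 : n.choose (ℓ + a) * (ℓ + a).choose ℓ
              = n.choose ℓ * (n - ℓ).choose a := by
            rw [Nat.choose_mul (n := n) (k := ℓ + a) (s := ℓ) (by omega), Nat.add_sub_cancel_left]
          have h3 : (m - ℓ).choose a * (m - (ℓ + a)).choose (i - ℓ)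
              = (m - ℓ).choose (i - ℓ) * (m - i).choose a := by
            have e1 : m - (ℓ + a) = m - ℓ - a := by omega
            have e2 : m - ℓ - (i - ℓ) = m - i := by omega
            rw [e1, cmc (m - ℓ) a (i - ℓ), e2]
          have h4 : (n - ℓ).choose a * (n - (ℓ + a)).choose (j - ℓ)
              = (n - ℓ).choose (j - ℓ) * (n - j).choose a := by
            have e1 : n - (ℓ + a) = n - ℓ - a := by omega
            have e2 : n - ℓ - (j - ℓ) = n - j := by omega
            rw [e1, cmc (n - ℓ) a (j - ℓ), e2]
          calc m.choose (ℓ + a) * n.choose (ℓ + a)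
              * ((ℓ + a).choose ℓ * (ℓ + a).choose ℓ)
              * ((m - (ℓ + a)).choose (i - ℓ) * (n - (ℓ + a)).choose (j - ℓ))
              = (m.choose (ℓ + a) * (ℓ + a).choose ℓ) * ((m - (ℓ + a)).choose (i - ℓ))
                * ((n.choose (ℓ + a) * (ℓ + a).choose ℓ) * ((n - (ℓ + a)).choose (j - ℓ))) := by
                ring
            _ = (m.choose ℓ * ((m - ℓ).choose a * (m - (ℓ + a)).choose (i - ℓ)))
                * (n.choose ℓ * ((n - ℓ).choose a * (n - (ℓ + a)).choose (j - ℓ))) := by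
                rw [h1, h2]; ring
            _ = _ := by rw [h3, h4]; ring
        rw [Finset.sum_congr rfl hsum, ← Finset.mul_sum]
        have hNval : min m n + 1 - ℓ = (min m n - ℓ) + 1 := by omega
        rw [hNval, vand2 (m - i) (n - j) (min m n - ℓ) (by omega)]
        have e3 : m - i + (n - j) = m + n - i - j := by omega
        have e4 : (m - i + (n - j)).choose (n - j) = (m + n - i - j).choose (m - i) := by
          rw [← Nat.choose_symm_add (a := m - i) (b := n - j), e3]
        rw [e4]
        have h5 : m.choose ℓ * (m - ℓ).choose (i - ℓ) = m.choose i * i.choose ℓ := by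
          rw [← Nat.choose_mul (n := m) hℓi]
        have h6 : n.choose ℓ * (n - ℓ).choose (j - ℓ) = n.choose j * j.choose ℓ := by
          rw [← Nat.choose_mul (n := n) hℓj]
        rw [h5, h6]
      · intro k hk hk'
        rw [Finset.mem_Ico] at hk
        rw [Finset.mem_Ico, not_and_or] at hk'
        have : k < ℓ := by omega
        rw [Nat.choose_eq_zero_of_lt this]
        ring
    · exact Finset.sum_const_zero
  rw [Finset.sum_congr rfl stepC]
  have stepD : ∀ ℓ ∈ range (min m n + 1),
      (if ℓ ≤ i ∧ ℓ ≤ j then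
          (m.choose i * i.choose ℓ) * (n.choose j * j.choose ℓ)
            * (m + n - i - j).choose (m - i) else 0)
      = (m.choose i * n.choose j * (m + n - i - j).choose (m - i))
          * (i.choose ℓ * j.choose ℓ) := by
    intro ℓ _
    split_ifs with hguard
    · ring
    · rw [not_and_or] at hguard
      have : i.choose ℓ * j.choose ℓ = 0 := by
        rcases hguard with h | h
        · rw [Nat.choose_eq_zero_of_lt (show i < ℓ by omega), zero_mul]
        · rw [Nat.choose_eq_zero_of_lt (show j < ℓ by omega), mul_zero]
      rw [this, mul_zero]
  rw [Finset.sum_congr rfl stepD, ← Finset.mul_sum,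
    vand2 i j (min m n) (by omega), Nat.choose_symm_add]
  ring

lemma coefid (m n i j : ℕ) (hi : i ≤ m) (hj : j ≤ n) :
    m.choose i * n.choose j * ((i + j).factorial * (m + n - i - j).factorial)
      = m.factorial * n.factorial
        * ((i + j).choose i * (m + n - i - j).choose (m - i)) := by
  have h1 : (i + j).choose i * i.factorial * j.factorial = (i + j).factorial := by
    rw [Nat.choose_symm_add]
    exact Nat.add_choose_mul_factorial_mul_factorial i j
  have h2 : (m + n - i - j).choose (m - i) * (m - i).factorial * (n - j).factorial
      = (m + n - i - j).factorial := by
    have e : m + n - i - j = (m - i) + (n - j) := by omega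
    rw [e, Nat.choose_symm_add]
    exact Nat.add_choose_mul_factorial_mul_factorial _ _
  have h3 : m.choose i * i.factorial * (m - i).factorial = m.factorial :=
    Nat.choose_mul_factorial_mul_factorial hi
  have h4 : n.choose j * j.factorial * (n - j).factorial = n.factorial :=
    Nat.choose_mul_factorial_mul_factorial hj
  rw [← h1, ← h2, ← h3, ← h4]
  ring

lemma bernstein_cont (n k : ℕ) : Continuous (fun t : ℝ => bernsteinBasis n k t) := by
  unfold bernsteinBasis
  continuity

lemma bernstein_integral (m n i j : ℕ) (hi : i ≤ m) (hj : j ≤ n) :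
    (∫ t in (0:ℝ)..1, bernsteinBasis m i t * bernsteinBasis n j t)
      = ((m.choose i : ℝ) * (n.choose j : ℝ))
        * (((i + j).factorial : ℝ) * ((m + n - i - j).factorial : ℝ)
            / ((m + n + 1).factorial : ℝ)) := by
  have hfun : ∀ t : ℝ, bernsteinBasis m i t * bernsteinBasis n j t
      = ((m.choose i : ℝ) * (n.choose j : ℝ))
          * (t ^ (i + j) * (1 - t) ^ ((m - i) + (n - j))) := by
    intro t
    unfold bernsteinBasis
    rw [pow_add, pow_add]
    ring
  rw [intervalIntegral.integral_congr (fun t _ => hfun t), intervalIntegral.integral_const_mul,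
    beta_nat]
  have e1 : i + j + (m - i + (n - j)) + 1 = m + n + 1 := by omega
  have e2 : m - i + (n - j) = m + n - i - j := by omega
  rw [e1, e2]

lemma expand1 (N k ℓ : ℕ) (hk : k ≤ N) (hℓ : ℓ ≤ k) (x : ℝ) :
    bernsteinBasis k ℓ x = ∑ i ∈ Finset.range (N + 1),
      (if ℓ ≤ i then ((k.choose ℓ * (N - k).choose (i - ℓ) : ℕ) : ℝ) else 0)
        * (x ^ i * (1 - x) ^ (N - i)) := by
  have h2 : bernsteinBasis k ℓ x
      = ∑ a ∈ range (N - k + 1),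
        ((k.choose ℓ * (N - k).choose a : ℕ) : ℝ)
          * (x ^ (ℓ + a) * (1 - x) ^ (N - (ℓ + a))) := by
    conv_lhs => rw [show bernsteinBasis k ℓ x
      = bernsteinBasis k ℓ x * ((x + (1 - x)) ^ (N - k)) by norm_num]
    rw [add_pow, Finset.mul_sum]
    apply Finset.sum_congr rfl
    intro a ha
    rw [Finset.mem_range] at ha
    unfold bernsteinBasis
    have e1 : N - (ℓ + a) = (k - ℓ) + (N - k - a) := by omega
    rw [e1, pow_add, pow_add]
    push_cast
    ring
  rw [h2]
  symm
  have hsub : Finset.Ico ℓ (ℓ + (N - k) + 1) ⊆ Finset.range (N + 1) := by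
    intro t ht
    rw [Finset.mem_Ico] at ht
    rw [Finset.mem_range]
    omega
  rw [← Finset.sum_subset hsub]
  · rw [Finset.sum_Ico_eq_sum_range]
    have e2 : ℓ + (N - k) + 1 - ℓ = N - k + 1 := by omega
    rw [e2]
    apply Finset.sum_congr rfl
    intro a ha
    rw [Finset.mem_range] at ha
    rw [if_pos (Nat.le_add_right ℓ a), Nat.add_sub_cancel_left]
  · intro t ht ht'
    rw [Finset.mem_Ico, not_and_or, not_le, not_lt] at ht'
    rcases ht' with h | h
    · rw [if_neg (by omega), zero_mul]
    · rw [if_pos (by omega),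
        Nat.choose_eq_zero_of_lt (show N - k < t - ℓ by omega)]
      norm_num

end Aux

theorem durrmeyer_comp_kernel_repr (m n : ℕ) (x y : ℝ)
    (hx : x ∈ Set.Icc (0:ℝ) 1) (hy : y ∈ Set.Icc (0:ℝ) 1) :
    durrmeyerKernelComp m n x y =
      (((m + 1).factorial : ℝ) * ((n + 1).factorial : ℝ) / ((m + n + 1).factorial : ℝ)) *
        ∑ k ∈ Finset.range (min m n + 1),
          (m.choose k : ℝ) * (n.choose k : ℝ) *
            ∑ ℓ ∈ Finset.range (k + 1), bernsteinBasis k ℓ x * bernsteinBasis k ℓ y := by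
  classical
  -- Step 1 : expand the composed kernel as a double sum of integrals
  have hfun : ∀ t : ℝ, durrmeyerKernel m x t * durrmeyerKernel n t y
      = ∑ i ∈ Finset.range (m + 1), ∑ j ∈ Finset.range (n + 1),
        (((m : ℝ) + 1) * ((n : ℝ) + 1)) * (bernsteinBasis m i x * bernsteinBasis n j y)
          * (bernsteinBasis m i t * bernsteinBasis n j t) := by
    intro t
    unfold durrmeyerKernel
    rw [mul_mul_mul_comm, Finset.sum_mul_sum, Finset.mul_sum]
    refine Finset.sum_congr rfl fun i _ => ?_
    rw [Finset.mul_sum]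
    refine Finset.sum_congr rfl fun j _ => ?_
    ring
  have step1 : durrmeyerKernelComp m n x y
      = ∑ i ∈ Finset.range (m + 1), ∑ j ∈ Finset.range (n + 1),
        (((m : ℝ) + 1) * ((n : ℝ) + 1)) * (bernsteinBasis m i x * bernsteinBasis n j y)
          * ∫ t in (0:ℝ)..1, bernsteinBasis m i t * bernsteinBasis n j t := by
    have hint1 : ∀ i ∈ Finset.range (m + 1), IntervalIntegrable
        (fun t => ∑ j ∈ Finset.range (n + 1),
          (((m : ℝ) + 1) * ((n : ℝ) + 1)) * (bernsteinBasis m i x * bernsteinBasis n j y)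
            * (bernsteinBasis m i t * bernsteinBasis n j t)) MeasureTheory.volume 0 1 := by
      intro i _
      apply Continuous.intervalIntegrable
      exact continuous_finset_sum _ fun j _ =>
        continuous_const.mul ((bernstein_cont m i).mul (bernstein_cont n j))
    have hint2 : ∀ (i : ℕ), ∀ j ∈ Finset.range (n + 1), IntervalIntegrable
        (fun t => (((m : ℝ) + 1) * ((n : ℝ) + 1)) * (bernsteinBasis m i x * bernsteinBasis n j y)
            * (bernsteinBasis m i t * bernsteinBasis n j t)) MeasureTheory.volume 0 1 := by
      intro i j _
      apply Continuous.intervalIntegrable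
      exact continuous_const.mul ((bernstein_cont m i).mul (bernstein_cont n j))
    unfold durrmeyerKernelComp
    rw [intervalIntegral.integral_congr (fun t _ => hfun t)]
    rw [intervalIntegral.integral_finset_sum hint1]
    refine Finset.sum_congr rfl fun i _ => ?_
    rw [intervalIntegral.integral_finset_sum (hint2 i)]
    refine Finset.sum_congr rfl fun j _ => ?_
    rw [intervalIntegral.integral_const_mul]
  rw [step1]
  -- Step 2 : rewrite the right-hand side as a double sum over the same monomials
  have rhs_eq : ∑ k ∈ Finset.range (min m n + 1),
        (m.choose k : ℝ) * (n.choose k : ℝ) *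
          ∑ ℓ ∈ Finset.range (k + 1), bernsteinBasis k ℓ x * bernsteinBasis k ℓ y
      = ∑ i ∈ Finset.range (m + 1), ∑ j ∈ Finset.range (n + 1),
          ((∑ k ∈ Finset.range (min m n + 1), ∑ ℓ ∈ Finset.range (k + 1),
            (if ℓ ≤ i ∧ ℓ ≤ j then
              m.choose k * n.choose k * (k.choose ℓ * k.choose ℓ)
                * ((m - k).choose (i - ℓ) * (n - k).choose (j - ℓ))
            else 0) : ℕ) : ℝ)
          * ((x ^ i * (1 - x) ^ (m - i)) * (y ^ j * (1 - y) ^ (n - j))) := by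
    have hterm : ∀ k ∈ Finset.range (min m n + 1), ∀ ℓ ∈ Finset.range (k + 1),
        (m.choose k : ℝ) * (n.choose k : ℝ) * (bernsteinBasis k ℓ x * bernsteinBasis k ℓ y)
        = ∑ i ∈ Finset.range (m + 1), ∑ j ∈ Finset.range (n + 1),
            ((if ℓ ≤ i ∧ ℓ ≤ j then
              m.choose k * n.choose k * (k.choose ℓ * k.choose ℓ)
                * ((m - k).choose (i - ℓ) * (n - k).choose (j - ℓ))
            else 0 : ℕ) : ℝ)
            * ((x ^ i * (1 - x) ^ (m - i)) * (y ^ j * (1 - y) ^ (n - j))) := by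
      intro k hk ℓ hℓ
      rw [Finset.mem_range] at hk hℓ
      rw [expand1 m k ℓ (by omega) (by omega) x, expand1 n k ℓ (by omega) (by omega) y,
        Finset.sum_mul_sum, Finset.mul_sum]
      refine Finset.sum_congr rfl fun i _ => ?_
      rw [Finset.mul_sum]
      refine Finset.sum_congr rfl fun j _ => ?_
      by_cases hli : ℓ ≤ i
      · by_cases hlj : ℓ ≤ j
        · rw [if_pos hli, if_pos hlj, if_pos ⟨hli, hlj⟩]
          push_cast
          ring
        · rw [if_neg hlj, if_neg (by tauto : ¬(ℓ ≤ i ∧ ℓ ≤ j))]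
          push_cast
          ring
      · rw [if_neg hli, if_neg (by tauto : ¬(ℓ ≤ i ∧ ℓ ≤ j))]
        push_cast
        ring
    calc ∑ k ∈ Finset.range (min m n + 1),
          (m.choose k : ℝ) * (n.choose k : ℝ) *
            ∑ ℓ ∈ Finset.range (k + 1), bernsteinBasis k ℓ x * bernsteinBasis k ℓ y
        = ∑ k ∈ Finset.range (min m n + 1), ∑ ℓ ∈ Finset.range (k + 1),
            ∑ i ∈ Finset.range (m + 1), ∑ j ∈ Finset.range (n + 1),
              ((if ℓ ≤ i ∧ ℓ ≤ j then
                m.choose k * n.choose k * (k.choose ℓ * k.choose ℓ)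
                  * ((m - k).choose (i - ℓ) * (n - k).choose (j - ℓ))
              else 0 : ℕ) : ℝ)
              * ((x ^ i * (1 - x) ^ (m - i)) * (y ^ j * (1 - y) ^ (n - j))) := by
          refine Finset.sum_congr rfl fun k hk => ?_
          rw [Finset.mul_sum]
          refine Finset.sum_congr rfl fun ℓ hℓ => ?_
          exact hterm k hk ℓ hℓ
      _ = ∑ i ∈ Finset.range (m + 1), ∑ j ∈ Finset.range (n + 1),
            ∑ k ∈ Finset.range (min m n + 1), ∑ ℓ ∈ Finset.range (k + 1),
              ((if ℓ ≤ i ∧ ℓ ≤ j then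
                m.choose k * n.choose k * (k.choose ℓ * k.choose ℓ)
                  * ((m - k).choose (i - ℓ) * (n - k).choose (j - ℓ))
              else 0 : ℕ) : ℝ)
              * ((x ^ i * (1 - x) ^ (m - i)) * (y ^ j * (1 - y) ^ (n - j))) := by
          have s1 : ∀ k, (∑ ℓ ∈ Finset.range (k + 1),
              ∑ i ∈ Finset.range (m + 1), ∑ j ∈ Finset.range (n + 1),
                ((if ℓ ≤ i ∧ ℓ ≤ j then
                  m.choose k * n.choose k * (k.choose ℓ * k.choose ℓ)
                    * ((m - k).choose (i - ℓ) * (n - k).choose (j - ℓ))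
                else 0 : ℕ) : ℝ)
                * ((x ^ i * (1 - x) ^ (m - i)) * (y ^ j * (1 - y) ^ (n - j))))
              = ∑ i ∈ Finset.range (m + 1), ∑ j ∈ Finset.range (n + 1),
                ∑ ℓ ∈ Finset.range (k + 1),
                ((if ℓ ≤ i ∧ ℓ ≤ j then
                  m.choose k * n.choose k * (k.choose ℓ * k.choose ℓ)
                    * ((m - k).choose (i - ℓ) * (n - k).choose (j - ℓ))
                else 0 : ℕ) : ℝ)
                * ((x ^ i * (1 - x) ^ (m - i)) * (y ^ j * (1 - y) ^ (n - j))) := by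
            intro k
            rw [Finset.sum_comm]
            exact Finset.sum_congr rfl fun i _ => Finset.sum_comm
          rw [Finset.sum_congr rfl fun k _ => s1 k, Finset.sum_comm]
          exact Finset.sum_congr rfl fun i _ => Finset.sum_comm
      _ = _ := by
          refine Finset.sum_congr rfl fun i _ => Finset.sum_congr rfl fun j _ => ?_
          rw [Nat.cast_sum, Finset.sum_mul]
          refine Finset.sum_congr rfl fun k _ => ?_
          rw [Nat.cast_sum, Finset.sum_mul]
  rw [rhs_eq, Finset.mul_sum]
  refine Finset.sum_congr rfl fun i hi => ?_
  rw [Finset.mul_sum]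
  refine Finset.sum_congr rfl fun j hj => ?_
  rw [Finset.mem_range] at hi hj
  have hi' : i ≤ m := by omega
  have hj' : j ≤ n := by omega
  rw [bernstein_integral m n i j hi' hj', star m n i j hi' hj']
  -- now a pure scalar identity
  have hb : bernsteinBasis m i x * bernsteinBasis n j y
      = ((m.choose i : ℝ) * (n.choose j : ℝ))
          * ((x ^ i * (1 - x) ^ (m - i)) * (y ^ j * (1 - y) ^ (n - j))) := by
    unfold bernsteinBasis
    ring
  rw [hb]
  have hcoef := coefid m n i j hi' hj'
  have hfpos : ((m + n + 1).factorial : ℝ) ≠ 0 := by positivity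
  have hcoefR : (m.choose i : ℝ) * (n.choose j : ℝ)
        * (((i + j).factorial : ℝ) * ((m + n - i - j).factorial : ℝ))
      = (m.factorial : ℝ) * (n.factorial : ℝ)
        * (((i + j).choose i : ℝ) * ((m + n - i - j).choose (m - i) : ℝ)) := by
    exact_mod_cast congrArg (Nat.cast : ℕ → ℝ) hcoef
  have hm1 : ((m + 1).factorial : ℝ) = ((m : ℝ) + 1) * (m.factorial : ℝ) := by
    rw [Nat.factorial_succ]; push_cast; ring
  have hn1 : ((n + 1).factorial : ℝ) = ((n : ℝ) + 1) * (n.factorial : ℝ) := by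
    rw [Nat.factorial_succ]; push_cast; ring
  rw [hm1, hn1]
  field_simp
  push_cast
  linear_combination ((m.choose i : ℝ) * (n.choose j : ℝ)
      * ((x ^ i * (1 - x) ^ (m - i)) * (y ^ j * (1 - y) ^ (n - j)))) * hcoefR
end

section
/- For integers n_1, n_2, n_3 ≥ 0, the kernel of the composition M_{n_3} ∘ M_{n_2} ∘ M_{n_1} of three classical (univariate) Bernstein–Durrmeyer operators has the representation K_{n_3,n_2,n_1}(x,y) = ((n_3+1)!·(n_2+1)!·(n_1+1)!·(n_3+n_2+n_1+1)!/((n_3+n_2+1)!·(n_3+n_1+1)!·(n_2+n_1+1)!)) · Σ_{k=0}^{min{n_1,n_2,n_3}} (C(n_3,k)·C(n_2,k)·C(n_1,k)/C(n_3+n_2+n_1+1,k)) · Σ_{ℓ=0}^{k} p_{k,ℓ}(x) · p_{k,ℓ}(y) for all x, y ∈ [0,1]. -/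
open MeasureTheory

/-- Kernel of the triple composition `M_{n₃} ∘ M_{n₂} ∘ M_{n₁}`. -/
noncomputable def durrmeyerKernelComp3 (n₃ n₂ n₁ : ℕ) (x y : ℝ) : ℝ :=
  ∫ t in (0:ℝ)..1, ∫ s in (0:ℝ)..1,
    durrmeyerKernel n₃ x s * durrmeyerKernel n₂ s t * durrmeyerKernel n₁ t y

open Finset intervalIntegral


open Finset

/-- Vandermonde in range form. -/
lemma vand_range (A B q : ℕ) :
    ∑ r ∈ range (q + 1), A.choose r * B.choose (q - r) = (A + B).choose q := by
  rw [Nat.add_choose_eq, Finset.Nat.sum_antidiagonal_eq_sum_range_succ_mk]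

private lemma sum_cc_aux (p q T : ℕ) (h : q ≤ T) :
    ∑ r ∈ range (T + 1), p.choose r * q.choose r = (p + q).choose p := by
  have h1 : ∑ r ∈ range (T + 1), p.choose r * q.choose r
      = ∑ r ∈ range (q + 1), p.choose r * q.choose r := by
    refine (Finset.sum_subset (Finset.range_subset_range.2 (by omega)) ?_).symm
    intro r _ hr
    have : q < r := by simpa using hr
    simp [Nat.choose_eq_zero_of_lt this]
  rw [h1]
  have h2 : ∀ r ∈ range (q + 1), p.choose r * q.choose r
      = p.choose r * q.choose (q - r) := by
    intro r hr
    rw [Nat.choose_symm (by simpa using Nat.lt_succ_iff.mp (Finset.mem_range.mp hr))]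
  rw [Finset.sum_congr rfl h2, vand_range]
  rw [← Nat.choose_symm (Nat.le_add_right p q), Nat.add_sub_cancel_left]

/-- `∑ r C(p,r) C(q,r) = C(p+q,p)` provided the range covers `min p q`. -/
lemma sum_choose_mul_choose (p q T : ℕ) (h : min p q ≤ T) :
    ∑ r ∈ range (T + 1), p.choose r * q.choose r = (p + q).choose p := by
  rcases le_total q p with hqp | hpq
  · exact sum_cc_aux p q T (by omega)
  · have := sum_cc_aux q p T (by omega)
    have h2 : ∑ r ∈ range (T + 1), p.choose r * q.choose r
        = ∑ r ∈ range (T + 1), q.choose r * p.choose r := by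
      simp [Nat.mul_comm]
    rw [h2, this, Nat.add_comm q p, ← Nat.choose_symm (Nat.le_add_right p q),
      Nat.add_sub_cancel_left]

/-- Trinomial revision, unconditional in the upper index. -/
lemma trinom (n k s : ℕ) (hsk : s ≤ k) :
    n.choose k * k.choose s = n.choose s * (n - s).choose (k - s) := by
  rcases le_or_gt k n with hkn | hnk
  · exact Nat.choose_mul hsk
  · rw [Nat.choose_eq_zero_of_lt hnk, Nat.zero_mul]
    rcases le_or_gt s n with hsn | hns
    · rw [Nat.choose_eq_zero_of_lt (show n - s < k - s by omega), Nat.mul_zero]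
    · rw [Nat.choose_eq_zero_of_lt hns, Nat.zero_mul]

/-- `C(N,r) C(N-r,A) = C(N,A) C(N-A,r)`, unconditional. -/
lemma trinom2 (N r A : ℕ) :
    N.choose r * (N - r).choose A = N.choose A * (N - A).choose r := by
  rcases le_or_gt (r + A) N with hle | hlt
  · have h1 := Nat.choose_mul (n := N) (Nat.le_add_right r A)
    have h2 := Nat.choose_mul (n := N) (Nat.le_add_right A r)
    rw [Nat.add_sub_cancel_left] at h1
    rw [Nat.add_sub_cancel_left] at h2
    have h3 : (A + r).choose r = (A + r).choose A := by
      rw [← Nat.choose_symm (Nat.le_add_left r A), Nat.add_sub_cancel]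
    rw [← h1, ← h2, Nat.add_comm r A, h3]
  · -- both sides are zero
    rcases le_or_gt r N with hrN | hNr
    · rw [Nat.choose_eq_zero_of_lt (show N - r < A by omega), Nat.mul_zero]
      rcases le_or_gt A N with hAN | hNA
      · rw [Nat.choose_eq_zero_of_lt (show N - A < r by omega), Nat.mul_zero]
      · rw [Nat.choose_eq_zero_of_lt hNA, Nat.zero_mul]
    · rw [Nat.choose_eq_zero_of_lt hNr, Nat.zero_mul]
      rcases le_or_gt A N with hAN | hNA
      · rw [Nat.choose_eq_zero_of_lt (show N - A < r by omega), Nat.mul_zero]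
      · rw [Nat.choose_eq_zero_of_lt hNA, Nat.zero_mul]

lemma idCore_inner (n k a ℓ ℓ' : ℕ) (ha : a ≤ n) (hℓ : ℓ ≤ k) (h1 : ℓ' ≤ a) (h2 : ℓ' ≤ ℓ) :
    ∑ k' ∈ range (min n k + 1),
      n.choose k' * k.choose k' * (k'.choose ℓ' * k'.choose ℓ') *
        (n - k').choose (a - ℓ') * (k - k').choose (ℓ - ℓ')
    = n.choose ℓ' * (n - ℓ').choose (a - ℓ') * (k.choose ℓ' * (k - ℓ').choose (ℓ - ℓ')) *
        ((n - a) + (k - ℓ)).choose (n - a) := by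
  have hℓn : ℓ' ≤ min n k := le_min (h1.trans ha) (h2.trans hℓ)
  -- kill the terms with k' < ℓ'
  have hsub : ∑ k' ∈ range (min n k + 1),
      n.choose k' * k.choose k' * (k'.choose ℓ' * k'.choose ℓ') *
        (n - k').choose (a - ℓ') * (k - k').choose (ℓ - ℓ')
      = ∑ k' ∈ Ico ℓ' (min n k + 1),
      n.choose k' * k.choose k' * (k'.choose ℓ' * k'.choose ℓ') *
        (n - k').choose (a - ℓ') * (k - k').choose (ℓ - ℓ') := by
    refine (Finset.sum_subset ?_ ?_).symm
    · intro t ht; simp only [Finset.mem_Ico, Finset.mem_range] at *; omega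
    · intro t ht ht2
      simp only [Finset.mem_Ico, Finset.mem_range] at ht ht2
      have : t < ℓ' := by omega
      simp [Nat.choose_eq_zero_of_lt this]
  rw [hsub, Finset.sum_Ico_eq_sum_range]
  have hrange : min n k + 1 - ℓ' = (min n k - ℓ') + 1 := by omega
  rw [hrange]
  have hterm : ∀ r ∈ range ((min n k - ℓ') + 1),
      n.choose (ℓ' + r) * k.choose (ℓ' + r) * ((ℓ' + r).choose ℓ' * (ℓ' + r).choose ℓ') *
        (n - (ℓ' + r)).choose (a - ℓ') * (k - (ℓ' + r)).choose (ℓ - ℓ')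
      = (n.choose ℓ' * (n - ℓ').choose (a - ℓ') * (k.choose ℓ' * (k - ℓ').choose (ℓ - ℓ'))) *
          ((n - a).choose r * (k - ℓ).choose r) := by
    intro r _
    have e1 : n.choose (ℓ' + r) * (ℓ' + r).choose ℓ' * (n - (ℓ' + r)).choose (a - ℓ')
        = n.choose ℓ' * (n - ℓ').choose (a - ℓ') * (n - a).choose r := by
      rw [trinom n (ℓ' + r) ℓ' (Nat.le_add_right _ _), Nat.add_sub_cancel_left]
      rw [mul_assoc, Nat.sub_add_eq, trinom2 (n - ℓ') r (a - ℓ'),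
        Nat.sub_sub_sub_cancel_right h1, ← mul_assoc]
    have e2 : k.choose (ℓ' + r) * (ℓ' + r).choose ℓ' * (k - (ℓ' + r)).choose (ℓ - ℓ')
        = k.choose ℓ' * (k - ℓ').choose (ℓ - ℓ') * (k - ℓ).choose r := by
      rw [trinom k (ℓ' + r) ℓ' (Nat.le_add_right _ _), Nat.add_sub_cancel_left]
      rw [mul_assoc, Nat.sub_add_eq, trinom2 (k - ℓ') r (ℓ - ℓ'),
        Nat.sub_sub_sub_cancel_right h2, ← mul_assoc]
    calc n.choose (ℓ' + r) * k.choose (ℓ' + r) * ((ℓ' + r).choose ℓ' * (ℓ' + r).choose ℓ') *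
        (n - (ℓ' + r)).choose (a - ℓ') * (k - (ℓ' + r)).choose (ℓ - ℓ')
        = (n.choose (ℓ' + r) * (ℓ' + r).choose ℓ' * (n - (ℓ' + r)).choose (a - ℓ')) *
          (k.choose (ℓ' + r) * (ℓ' + r).choose ℓ' * (k - (ℓ' + r)).choose (ℓ - ℓ')) := by ring
      _ = (n.choose ℓ' * (n - ℓ').choose (a - ℓ') * (n - a).choose r) *
          (k.choose ℓ' * (k - ℓ').choose (ℓ - ℓ') * (k - ℓ).choose r) := by rw [e1, e2]
      _ = (n.choose ℓ' * (n - ℓ').choose (a - ℓ') * (k.choose ℓ' * (k - ℓ').choose (ℓ - ℓ'))) *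
          ((n - a).choose r * (k - ℓ).choose r) := by ring
  rw [Finset.sum_congr rfl hterm, ← Finset.mul_sum]
  congr 1
  exact sum_choose_mul_choose (n - a) (k - ℓ) (min n k - ℓ') (by omega)

lemma idCore (n k a ℓ : ℕ) (ha : a ≤ n) (hℓ : ℓ ≤ k) :
    ∑ k' ∈ range (min n k + 1), ∑ ℓ' ∈ range (min n k + 1),
      n.choose k' * k.choose k' * (k'.choose ℓ' * k'.choose ℓ') *
        (if ℓ' ≤ a then (n - k').choose (a - ℓ') else 0) *
        (if ℓ' ≤ ℓ then (k - k').choose (ℓ - ℓ') else 0)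
    = n.choose a * k.choose ℓ * ((a + ℓ).choose a * ((n - a) + (k - ℓ)).choose (n - a)) := by
  rw [Finset.sum_comm]
  -- shrink outer (now ℓ') range to `min a ℓ + 1`
  have hshrink : ∑ ℓ' ∈ range (min n k + 1), ∑ k' ∈ range (min n k + 1),
      n.choose k' * k.choose k' * (k'.choose ℓ' * k'.choose ℓ') *
        (if ℓ' ≤ a then (n - k').choose (a - ℓ') else 0) *
        (if ℓ' ≤ ℓ then (k - k').choose (ℓ - ℓ') else 0)
      = ∑ ℓ' ∈ range (min a ℓ + 1), ∑ k' ∈ range (min n k + 1),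
      n.choose k' * k.choose k' * (k'.choose ℓ' * k'.choose ℓ') *
        (if ℓ' ≤ a then (n - k').choose (a - ℓ') else 0) *
        (if ℓ' ≤ ℓ then (k - k').choose (ℓ - ℓ') else 0) := by
    refine (Finset.sum_subset ?_ ?_).symm
    · intro t ht; simp only [Finset.mem_range] at ht ⊢; omega
    · intro t _ ht2
      simp only [Finset.mem_range] at ht2
      refine Finset.sum_eq_zero fun k' _ => ?_
      rcases Nat.lt_or_ge a t with h | h
      · rw [if_neg (show ¬ t ≤ a by omega)]; ring
      · rw [if_neg (show ¬ t ≤ ℓ by omega)]; ring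
  rw [hshrink]
  have hmain : ∀ ℓ' ∈ range (min a ℓ + 1),
      ∑ k' ∈ range (min n k + 1),
        n.choose k' * k.choose k' * (k'.choose ℓ' * k'.choose ℓ') *
          (if ℓ' ≤ a then (n - k').choose (a - ℓ') else 0) *
          (if ℓ' ≤ ℓ then (k - k').choose (ℓ - ℓ') else 0)
      = (n.choose a * k.choose ℓ * ((n - a) + (k - ℓ)).choose (n - a)) *
          (a.choose ℓ' * ℓ.choose ℓ') := by
    intro ℓ' hℓ'
    simp only [Finset.mem_range] at hℓ'
    have h1 : ℓ' ≤ a := by omega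
    have h2 : ℓ' ≤ ℓ := by omega
    have hsimp : ∀ k' ∈ range (min n k + 1),
        n.choose k' * k.choose k' * (k'.choose ℓ' * k'.choose ℓ') *
          (if ℓ' ≤ a then (n - k').choose (a - ℓ') else 0) *
          (if ℓ' ≤ ℓ then (k - k').choose (ℓ - ℓ') else 0)
        = n.choose k' * k.choose k' * (k'.choose ℓ' * k'.choose ℓ') *
          (n - k').choose (a - ℓ') * (k - k').choose (ℓ - ℓ') := by
      intro k' _; rw [if_pos h1, if_pos h2]
    rw [Finset.sum_congr rfl hsimp, idCore_inner n k a ℓ ℓ' ha hℓ h1 h2]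
    have g1 : n.choose ℓ' * (n - ℓ').choose (a - ℓ') = n.choose a * a.choose ℓ' := by
      exact (Nat.choose_mul (n := n) h1).symm
    have g2 : k.choose ℓ' * (k - ℓ').choose (ℓ - ℓ') = k.choose ℓ * ℓ.choose ℓ' := by
      exact (Nat.choose_mul (n := k) h2).symm
    rw [g1, g2]; ring
  rw [Finset.sum_congr rfl hmain, ← Finset.mul_sum]
  rw [sum_choose_mul_choose a ℓ (min a ℓ) le_rfl]
  ring

lemma idS (n₃ n₂ n₁ j : ℕ) (hj : j ≤ min n₃ n₂) :
    ∑ k ∈ range (min n₃ n₂ + 1), n₂.choose k * k.choose j * (n₃ + n₁ + 1).choose (n₃ - k)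
    = n₂.choose j * ((n₂ - j) + (n₃ + n₁ + 1)).choose (n₃ - j) := by
  have hstep1 : ∑ k ∈ range (min n₃ n₂ + 1),
      n₂.choose k * k.choose j * (n₃ + n₁ + 1).choose (n₃ - k)
      = ∑ k ∈ Ico j (min n₃ n₂ + 1),
      n₂.choose k * k.choose j * (n₃ + n₁ + 1).choose (n₃ - k) := by
    refine (Finset.sum_subset ?_ ?_).symm
    · intro t ht; simp only [Finset.mem_Ico, Finset.mem_range] at *; omega
    · intro t ht ht2
      simp only [Finset.mem_Ico, Finset.mem_range] at ht ht2
      have : t < j := by omega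
      simp [Nat.choose_eq_zero_of_lt this]
  rw [hstep1, Finset.sum_Ico_eq_sum_range]
  have hr : min n₃ n₂ + 1 - j = (min n₃ n₂ - j) + 1 := by omega
  rw [hr]
  have hterm : ∀ r ∈ range ((min n₃ n₂ - j) + 1),
      n₂.choose (j + r) * (j + r).choose j * (n₃ + n₁ + 1).choose (n₃ - (j + r))
      = n₂.choose j * ((n₂ - j).choose r * (n₃ + n₁ + 1).choose ((n₃ - j) - r)) := by
    intro r _
    rw [trinom n₂ (j + r) j (Nat.le_add_right _ _), Nat.add_sub_cancel_left,
      Nat.sub_add_eq, mul_assoc]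
  rw [Finset.sum_congr rfl hterm, ← Finset.mul_sum]
  congr 1
  -- extend the range to (n₃ - j) + 1 and apply Vandermonde
  have hext : ∑ r ∈ range ((min n₃ n₂ - j) + 1),
      (n₂ - j).choose r * (n₃ + n₁ + 1).choose ((n₃ - j) - r)
      = ∑ r ∈ range ((n₃ - j) + 1),
      (n₂ - j).choose r * (n₃ + n₁ + 1).choose ((n₃ - j) - r) := by
    refine Finset.sum_subset ?_ ?_
    · intro t ht; simp only [Finset.mem_range] at *; omega
    · intro t ht ht2
      simp only [Finset.mem_range] at ht ht2
      have : n₂ - j < t := by omega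
      simp [Nat.choose_eq_zero_of_lt this]
  rw [hext, vand_range]


lemma contInt {f : ℝ → ℝ} (hf : Continuous f) :
    IntervalIntegrable f MeasureTheory.volume 0 1 := hf.intervalIntegrable 0 1

lemma beta_nat_s2 : ∀ p q : ℕ, ∫ x in (0:ℝ)..1, x ^ p * (1 - x) ^ q
    = (p.factorial : ℝ) * q.factorial / (p + q + 1).factorial := by
  intro p
  induction p with
  | zero =>
    intro q
    have h0 : ∫ x in (0:ℝ)..1, x ^ 0 * (1 - x) ^ q = ∫ x in (0:ℝ)..1, (1 - x) ^ q := by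
      refine intervalIntegral.integral_congr fun x _ => by ring
    rw [h0]
    have h1 : ∫ x in (0:ℝ)..1, (1 - x) ^ q = ∫ x in (0:ℝ)..1, x ^ q := by
      have := intervalIntegral.integral_comp_sub_left (fun x : ℝ => x ^ q) 1 (a := 0) (b := 1)
      simpa using this
    rw [h1, integral_pow]
    simp [Nat.factorial_succ]
    field_simp
  | succ p IH =>
    intro q
    have hder : ∀ x ∈ Set.uIcc (0:ℝ) 1,
        HasDerivAt (fun x : ℝ => x ^ (p+1) * (1 - x) ^ (q+1))
          (((p:ℝ)+1) * x ^ p * (1-x) ^ (q+1) - ((q:ℝ)+1) * x ^ (p+1) * (1-x) ^ q) x := by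
      intro x _
      have h1 : HasDerivAt (fun x : ℝ => x ^ (p+1)) (((p:ℝ)+1) * x ^ p) x := by
        simpa using hasDerivAt_pow (p+1) x
      have h2 : HasDerivAt (fun x : ℝ => (1 - x) ^ (q+1))
          (((q:ℝ)+1) * (1-x) ^ q * (-1)) x := by
        have hid : HasDerivAt (fun x : ℝ => 1 - x) (-1) x := by
          simpa using (hasDerivAt_id x).const_sub (1:ℝ)
        simpa using hid.fun_pow (q+1)
      have := h1.fun_mul h2
      exact this.congr_deriv (by ring)
    have hint : IntervalIntegrable
        (fun x : ℝ => ((p:ℝ)+1) * x ^ p * (1-x) ^ (q+1) - ((q:ℝ)+1) * x ^ (p+1) * (1-x) ^ q)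
        MeasureTheory.volume 0 1 := contInt (by fun_prop)
    have key := intervalIntegral.integral_eq_sub_of_hasDerivAt hder hint
    simp only [one_pow, sub_self, zero_pow, Nat.succ_ne_zero, ne_eq, not_false_iff] at key
    have key2 : (∫ x in (0:ℝ)..1, ((p:ℝ)+1) * x ^ p * (1-x) ^ (q+1))
        - (∫ x in (0:ℝ)..1, ((q:ℝ)+1) * x ^ (p+1) * (1-x) ^ q) = 0 := by
      rw [← intervalIntegral.integral_sub (contInt (by fun_prop)) (contInt (by fun_prop))]
      rw [key]
      norm_num
    have e1 : (∫ x in (0:ℝ)..1, ((p:ℝ)+1) * x ^ p * (1-x) ^ (q+1))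
        = ((p:ℝ)+1) * ∫ x in (0:ℝ)..1, x ^ p * (1-x) ^ (q+1) := by
      rw [← intervalIntegral.integral_const_mul]
      refine intervalIntegral.integral_congr fun x _ => by ring
    have e2 : (∫ x in (0:ℝ)..1, ((q:ℝ)+1) * x ^ (p+1) * (1-x) ^ q)
        = ((q:ℝ)+1) * ∫ x in (0:ℝ)..1, x ^ (p+1) * (1-x) ^ q := by
      rw [← intervalIntegral.integral_const_mul]
      refine intervalIntegral.integral_congr fun x _ => by ring
    rw [e1, e2, IH q.succ] at key2
    have hq1 : ((q:ℝ)+1) ≠ 0 := by positivity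
    have hfac : ((p + (q+1) + 1).factorial : ℝ) ≠ 0 := by positivity
    have hgoalfac : (((p+1) + q + 1).factorial : ℝ) = ((p + (q+1) + 1).factorial : ℝ) := by
      norm_cast
      congr 1
      omega
    have : (∫ x in (0:ℝ)..1, x ^ (p+1) * (1 - x) ^ q)
        = ((p:ℝ)+1) * ((p.factorial : ℝ) * ((q+1).factorial) / ((p + (q+1) + 1).factorial))
          / ((q:ℝ)+1) := by
      field_simp at key2 ⊢
      linarith [key2]
    rw [this, hgoalfac]
    push_cast [Nat.factorial_succ]
    field_simp
lemma elev (n k' ℓ' : ℕ) (h1 : ℓ' ≤ k') (h2 : k' ≤ n) (x : ℝ) :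
    ∑ a ∈ range (n + 1),
      (if ℓ' ≤ a then (((n - k').choose (a - ℓ') : ℕ) : ℝ) else 0) * (x ^ a * (1 - x) ^ (n - a))
    = x ^ ℓ' * (1 - x) ^ (k' - ℓ') := by
  have step1 : ∑ a ∈ range (n + 1),
      (if ℓ' ≤ a then (((n - k').choose (a - ℓ') : ℕ) : ℝ) else 0) * (x ^ a * (1 - x) ^ (n - a))
      = ∑ a ∈ Ico ℓ' (n + 1),
      (if ℓ' ≤ a then (((n - k').choose (a - ℓ') : ℕ) : ℝ) else 0)
        * (x ^ a * (1 - x) ^ (n - a)) := by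
    refine (Finset.sum_subset ?_ ?_).symm
    · intro t ht; simp only [Finset.mem_Ico, Finset.mem_range] at *; omega
    · intro t ht ht2
      simp only [Finset.mem_Ico, Finset.mem_range] at ht ht2
      rw [if_neg (by omega)]; ring
  rw [step1, Finset.sum_Ico_eq_sum_range]
  have hr : n + 1 - ℓ' = (n - ℓ') + 1 := by omega
  rw [hr]
  have step2 : ∑ d ∈ range ((n - ℓ') + 1),
      (if ℓ' ≤ ℓ' + d then (((n - k').choose (ℓ' + d - ℓ') : ℕ) : ℝ) else 0)
        * (x ^ (ℓ' + d) * (1 - x) ^ (n - (ℓ' + d)))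
      = ∑ d ∈ range ((n - k') + 1),
      (((n - k').choose d : ℕ) : ℝ) * (x ^ (ℓ' + d) * (1 - x) ^ (n - (ℓ' + d))) := by
    rw [← Finset.sum_subset (show range ((n-k')+1) ⊆ range ((n-ℓ')+1) by
        intro t ht; simp only [Finset.mem_range] at *; omega) ?_]
    · refine Finset.sum_congr rfl fun d _ => ?_
      rw [if_pos (Nat.le_add_right _ _), Nat.add_sub_cancel_left]
    · intro t ht ht2
      simp only [Finset.mem_range] at ht ht2
      rw [if_pos (Nat.le_add_right _ _), Nat.add_sub_cancel_left,
        Nat.choose_eq_zero_of_lt (by omega)]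
      simp
  rw [step2]
  have expand : (x ^ ℓ' * (1 - x) ^ (k' - ℓ')) = (x ^ ℓ' * (1 - x) ^ (k' - ℓ')) *
      (x + (1 - x)) ^ (n - k') := by
    rw [show x + (1 - x) = 1 by ring, one_pow, mul_one]
  rw [expand, add_pow]
  rw [Finset.mul_sum]
  refine Finset.sum_congr rfl fun d hd => ?_
  simp only [Finset.mem_range] at hd
  have he : n - (ℓ' + d) = (k' - ℓ') + ((n - k') - d) := by omega
  rw [he, pow_add, pow_add]
  ring

lemma sum_comm4 {M : Type*} [AddCommMonoid M] (s1 s2 s3 s4 : Finset ℕ) (f : ℕ → ℕ → ℕ → ℕ → M) :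
    (∑ i ∈ s1, ∑ j ∈ s2, ∑ p ∈ s3, ∑ q ∈ s4, f i j p q)
    = ∑ p ∈ s3, ∑ q ∈ s4, ∑ j ∈ s2, ∑ i ∈ s1, f i j p q := by
  calc (∑ i ∈ s1, ∑ j ∈ s2, ∑ p ∈ s3, ∑ q ∈ s4, f i j p q)
      = ∑ i ∈ s1, ∑ p ∈ s3, ∑ j ∈ s2, ∑ q ∈ s4, f i j p q :=
        Finset.sum_congr rfl fun i _ => Finset.sum_comm
    _ = ∑ p ∈ s3, ∑ i ∈ s1, ∑ j ∈ s2, ∑ q ∈ s4, f i j p q := Finset.sum_comm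
    _ = ∑ p ∈ s3, ∑ i ∈ s1, ∑ q ∈ s4, ∑ j ∈ s2, f i j p q :=
        Finset.sum_congr rfl fun p _ => Finset.sum_congr rfl fun i _ => Finset.sum_comm
    _ = ∑ p ∈ s3, ∑ q ∈ s4, ∑ i ∈ s1, ∑ j ∈ s2, f i j p q :=
        Finset.sum_congr rfl fun p _ => Finset.sum_comm
    _ = ∑ p ∈ s3, ∑ q ∈ s4, ∑ j ∈ s2, ∑ i ∈ s1, f i j p q :=
        Finset.sum_congr rfl fun p _ => Finset.sum_congr rfl fun q _ => Finset.sum_comm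

lemma fold (n k : ℕ) (x y : ℝ) :
    ∑ ℓ ∈ range (k + 1), ∑ a ∈ range (n + 1),
      ((n.choose a : ℝ) * ((a + ℓ).choose a : ℝ) * ((((n - a) + (k - ℓ)).choose (n - a) : ℕ) : ℝ))
        * (x ^ a * (1 - x) ^ (n - a)) * bernsteinBasis k ℓ y
    = ∑ k' ∈ range (min n k + 1), ((n.choose k' : ℝ) * (k.choose k' : ℝ)) *
        ∑ ℓ' ∈ range (k' + 1), bernsteinBasis k' ℓ' x * bernsteinBasis k' ℓ' y := by
  -- rewrite each LHS term via (cast of) idCore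
  have hcoef : ∀ ℓ ∈ range (k + 1), ∀ a ∈ range (n + 1),
      ((n.choose a : ℝ) * ((a + ℓ).choose a : ℝ)
          * ((((n - a) + (k - ℓ)).choose (n - a) : ℕ) : ℝ))
        * (x ^ a * (1 - x) ^ (n - a)) * bernsteinBasis k ℓ y
      = ∑ k' ∈ range (min n k + 1), ∑ ℓ' ∈ range (min n k + 1),
          ((n.choose k' : ℝ) * (k.choose k' : ℝ) * ((k'.choose ℓ' : ℝ) * (k'.choose ℓ' : ℝ))
            * (if ℓ' ≤ a then (((n - k').choose (a - ℓ') : ℕ) : ℝ) else 0)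
            * (if ℓ' ≤ ℓ then (((k - k').choose (ℓ - ℓ') : ℕ) : ℝ) else 0))
            * ((x ^ a * (1 - x) ^ (n - a)) * (y ^ ℓ * (1 - y) ^ (k - ℓ))) := by
    intro ℓ hℓ a ha
    simp only [Finset.mem_range] at hℓ ha
    have ha' : a ≤ n := by omega
    have hℓ' : ℓ ≤ k := by omega
    have hid := idCore n k a ℓ ha' hℓ'
    have hidR : ((∑ k' ∈ range (min n k + 1), ∑ ℓ' ∈ range (min n k + 1),
        n.choose k' * k.choose k' * (k'.choose ℓ' * k'.choose ℓ') *
          (if ℓ' ≤ a then (n - k').choose (a - ℓ') else 0) *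
          (if ℓ' ≤ ℓ then (k - k').choose (ℓ - ℓ') else 0) : ℕ) : ℝ)
        = ((n.choose a * k.choose ℓ *
            ((a + ℓ).choose a * ((n - a) + (k - ℓ)).choose (n - a)) : ℕ) : ℝ) := by
      exact congrArg (fun z : ℕ => (z : ℝ)) hid
    push_cast [apply_ite (Nat.cast : ℕ → ℝ)] at hidR
    rw [bernsteinBasis]
    calc ((n.choose a : ℝ) * ((a + ℓ).choose a : ℝ)
          * ((((n - a) + (k - ℓ)).choose (n - a) : ℕ) : ℝ))
        * (x ^ a * (1 - x) ^ (n - a)) * ((k.choose ℓ : ℝ) * y ^ ℓ * (1 - y) ^ (k - ℓ))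
        = ((n.choose a : ℝ) * (k.choose ℓ : ℝ) * (((a + ℓ).choose a : ℝ)
            * ((((n - a) + (k - ℓ)).choose (n - a) : ℕ) : ℝ)))
          * ((x ^ a * (1 - x) ^ (n - a)) * (y ^ ℓ * (1 - y) ^ (k - ℓ))) := by ring
      _ = (∑ k' ∈ range (min n k + 1), ∑ ℓ' ∈ range (min n k + 1),
          (n.choose k' : ℝ) * (k.choose k' : ℝ) * ((k'.choose ℓ' : ℝ) * (k'.choose ℓ' : ℝ))
            * (if ℓ' ≤ a then (((n - k').choose (a - ℓ') : ℕ) : ℝ) else 0)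
            * (if ℓ' ≤ ℓ then (((k - k').choose (ℓ - ℓ') : ℕ) : ℝ) else 0))
          * ((x ^ a * (1 - x) ^ (n - a)) * (y ^ ℓ * (1 - y) ^ (k - ℓ))) := by rw [hidR]
      _ = ∑ k' ∈ range (min n k + 1), ∑ ℓ' ∈ range (min n k + 1),
          ((n.choose k' : ℝ) * (k.choose k' : ℝ) * ((k'.choose ℓ' : ℝ) * (k'.choose ℓ' : ℝ))
            * (if ℓ' ≤ a then (((n - k').choose (a - ℓ') : ℕ) : ℝ) else 0)
            * (if ℓ' ≤ ℓ then (((k - k').choose (ℓ - ℓ') : ℕ) : ℝ) else 0))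
            * ((x ^ a * (1 - x) ^ (n - a)) * (y ^ ℓ * (1 - y) ^ (k - ℓ))) := by
          rw [Finset.sum_mul]
          exact Finset.sum_congr rfl fun k' _ => by rw [Finset.sum_mul]
  calc ∑ ℓ ∈ range (k + 1), ∑ a ∈ range (n + 1),
      ((n.choose a : ℝ) * ((a + ℓ).choose a : ℝ) * ((((n - a) + (k - ℓ)).choose (n - a) : ℕ) : ℝ))
        * (x ^ a * (1 - x) ^ (n - a)) * bernsteinBasis k ℓ y
      = ∑ ℓ ∈ range (k + 1), ∑ a ∈ range (n + 1), ∑ k' ∈ range (min n k + 1),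
          ∑ ℓ' ∈ range (min n k + 1),
          ((n.choose k' : ℝ) * (k.choose k' : ℝ) * ((k'.choose ℓ' : ℝ) * (k'.choose ℓ' : ℝ))
            * (if ℓ' ≤ a then (((n - k').choose (a - ℓ') : ℕ) : ℝ) else 0)
            * (if ℓ' ≤ ℓ then (((k - k').choose (ℓ - ℓ') : ℕ) : ℝ) else 0))
            * ((x ^ a * (1 - x) ^ (n - a)) * (y ^ ℓ * (1 - y) ^ (k - ℓ))) :=
        Finset.sum_congr rfl fun ℓ hℓ => Finset.sum_congr rfl fun a ha => hcoef ℓ hℓ a ha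
    _ = ∑ k' ∈ range (min n k + 1), ∑ ℓ' ∈ range (min n k + 1), ∑ a ∈ range (n + 1),
          ∑ ℓ ∈ range (k + 1),
          ((n.choose k' : ℝ) * (k.choose k' : ℝ) * ((k'.choose ℓ' : ℝ) * (k'.choose ℓ' : ℝ))
            * (if ℓ' ≤ a then (((n - k').choose (a - ℓ') : ℕ) : ℝ) else 0)
            * (if ℓ' ≤ ℓ then (((k - k').choose (ℓ - ℓ') : ℕ) : ℝ) else 0))
            * ((x ^ a * (1 - x) ^ (n - a)) * (y ^ ℓ * (1 - y) ^ (k - ℓ))) :=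
        sum_comm4 _ _ _ _ _
    _ = ∑ k' ∈ range (min n k + 1), ∑ ℓ' ∈ range (min n k + 1),
          ((n.choose k' : ℝ) * (k.choose k' : ℝ) * ((k'.choose ℓ' : ℝ) * (k'.choose ℓ' : ℝ)))
          * ((∑ a ∈ range (n + 1),
              (if ℓ' ≤ a then (((n - k').choose (a - ℓ') : ℕ) : ℝ) else 0)
                * (x ^ a * (1 - x) ^ (n - a)))
            * (∑ ℓ ∈ range (k + 1),
              (if ℓ' ≤ ℓ then (((k - k').choose (ℓ - ℓ') : ℕ) : ℝ) else 0)
                * (y ^ ℓ * (1 - y) ^ (k - ℓ)))) := by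
        refine Finset.sum_congr rfl fun k' _ => Finset.sum_congr rfl fun ℓ' _ => ?_
        rw [Finset.sum_mul_sum, Finset.mul_sum]
        refine Finset.sum_congr rfl fun a _ => ?_
        rw [Finset.mul_sum]
        refine Finset.sum_congr rfl fun ℓ _ => by ring
    _ = ∑ k' ∈ range (min n k + 1), ∑ ℓ' ∈ range (min n k + 1),
          ((n.choose k' : ℝ) * (k.choose k' : ℝ) * ((k'.choose ℓ' : ℝ) * (k'.choose ℓ' : ℝ)))
          * ((if ℓ' ≤ k' then (x ^ ℓ' * (1 - x) ^ (k' - ℓ')) * (y ^ ℓ' * (1 - y) ^ (k' - ℓ'))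
              else 0)) := by
        refine Finset.sum_congr rfl fun k' hk' => Finset.sum_congr rfl fun ℓ' _ => ?_
        simp only [Finset.mem_range] at hk'
        by_cases hcase : ℓ' ≤ k'
        · rw [if_pos hcase, elev n k' ℓ' hcase (by omega) x, elev k k' ℓ' hcase (by omega) y]
        · rw [if_neg hcase, Nat.choose_eq_zero_of_lt (show k' < ℓ' by omega)]
          push_cast
          ring
    _ = ∑ k' ∈ range (min n k + 1), ((n.choose k' : ℝ) * (k.choose k' : ℝ)) *
          ∑ ℓ' ∈ range (k' + 1), bernsteinBasis k' ℓ' x * bernsteinBasis k' ℓ' y := by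
        refine Finset.sum_congr rfl fun k' hk' => ?_
        simp only [Finset.mem_range] at hk'
        rw [Finset.mul_sum]
        rw [← Finset.sum_subset (show range (k' + 1) ⊆ range (min n k + 1) by
            intro t ht; simp only [Finset.mem_range] at *; omega) ?_]
        · refine Finset.sum_congr rfl fun ℓ' hℓ' => ?_
          simp only [Finset.mem_range] at hℓ'
          rw [if_pos (by omega)]
          simp only [bernsteinBasis]
          ring
        · intro t ht ht2
          simp only [Finset.mem_range] at ht ht2
          rw [if_neg (show ¬ t ≤ k' by omega), Nat.choose_eq_zero_of_lt (show k' < t by omega)]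
          push_cast
          ring
lemma bern_cont (n k : ℕ) : Continuous (bernsteinBasis n k) := by
  unfold bernsteinBasis; fun_prop

lemma kern_cont_right (n : ℕ) (x : ℝ) : Continuous (fun s => durrmeyerKernel n x s) := by
  unfold durrmeyerKernel
  exact continuous_const.mul (continuous_finset_sum _ fun k _ =>
    continuous_const.mul (bern_cont n k))

lemma kern_cont_left (n : ℕ) (t : ℝ) : Continuous (fun s => durrmeyerKernel n s t) := by
  unfold durrmeyerKernel
  exact continuous_const.mul (continuous_finset_sum _ fun k _ =>
    ((bern_cont n k).mul continuous_const))

/-- Integral of a product of two Bernstein basis functions. -/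
lemma integral_bern_mul (n m a b : ℕ) (ha : a ≤ n) (hb : b ≤ m) :
    ∫ s in (0:ℝ)..1, bernsteinBasis n a s * bernsteinBasis m b s
    = (n.choose a : ℝ) * (m.choose b : ℝ) *
        (((a + b).factorial : ℝ) * (((n - a) + (m - b)).factorial : ℝ)
          / ((n + m + 1).factorial : ℝ)) := by
  have hpt : ∀ s : ℝ, bernsteinBasis n a s * bernsteinBasis m b s
      = ((n.choose a : ℝ) * (m.choose b : ℝ)) * (s ^ (a + b) * (1 - s) ^ ((n - a) + (m - b))) := by
    intro s
    simp only [bernsteinBasis]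
    rw [pow_add, pow_add]
    ring
  rw [intervalIntegral.integral_congr (fun s _ => hpt s),
    intervalIntegral.integral_const_mul, beta_nat_s2]
  have : (a + b) + ((n - a) + (m - b)) + 1 = n + m + 1 := by omega
  rw [this]

/-- The key scalar reduction of Beta values to products of binomials. -/
lemma keyNat (n m a b : ℕ) (ha : a ≤ n) (hb : b ≤ m) :
    n.choose a * m.choose b * (a + b).factorial * ((n - a) + (m - b)).factorial
    = n.factorial * m.factorial * ((a + b).choose a) * (((n - a) + (m - b)).choose (n - a)) := by
  have h1 := Nat.choose_mul_factorial_mul_factorial (Nat.le_add_right a b)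
  rw [Nat.add_sub_cancel_left] at h1
  have h2 := Nat.choose_mul_factorial_mul_factorial (Nat.le_add_right (n - a) (m - b))
  rw [Nat.add_sub_cancel_left] at h2
  have h3 := Nat.choose_mul_factorial_mul_factorial ha
  have h4 := Nat.choose_mul_factorial_mul_factorial hb
  calc n.choose a * m.choose b * (a + b).factorial * ((n - a) + (m - b)).factorial
      = n.choose a * m.choose b * ((a + b).choose a * a.factorial * b.factorial) *
        (((n - a) + (m - b)).choose (n - a) * (n - a).factorial * (m - b).factorial) := by
        rw [h1, h2]
    _ = (n.choose a * a.factorial * (n - a).factorial) *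
        (m.choose b * b.factorial * (m - b).factorial) *
        ((a + b).choose a) * (((n - a) + (m - b)).choose (n - a)) := by ring
    _ = n.factorial * m.factorial * ((a + b).choose a) *
        (((n - a) + (m - b)).choose (n - a)) := by rw [h3, h4]

lemma keyR (n m a b : ℕ) (ha : a ≤ n) (hb : b ≤ m) :
    (n.choose a : ℝ) * (m.choose b : ℝ) *
      (((a + b).factorial : ℝ) * (((n - a) + (m - b)).factorial : ℝ)
        / ((n + m + 1).factorial : ℝ))
    = ((n.factorial : ℝ) * (m.factorial : ℝ) / ((n + m + 1).factorial : ℝ)) *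
        (((a + b).choose a : ℝ) * ((((n - a) + (m - b)).choose (n - a) : ℕ) : ℝ)) := by
  have h := keyNat n m a b ha hb
  have hcast : ((n.choose a * m.choose b * (a + b).factorial *
      ((n - a) + (m - b)).factorial : ℕ) : ℝ)
      = ((n.factorial * m.factorial * ((a + b).choose a) *
        (((n - a) + (m - b)).choose (n - a)) : ℕ) : ℝ) := congrArg (fun z : ℕ => (z : ℝ)) h
  push_cast at hcast
  have hne : ((n + m + 1).factorial : ℝ) ≠ 0 := by positivity
  field_simp
  linarith [hcast]
lemma kernel_two_fold (n m : ℕ) (x t : ℝ) :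
    (∫ s in (0:ℝ)..1, durrmeyerKernel n x s * durrmeyerKernel m s t)
    = (((n+1).factorial : ℝ) * ((m+1).factorial : ℝ) / ((n+m+1).factorial : ℝ)) *
        ∑ k ∈ range (min n m + 1), ((n.choose k : ℝ) * (m.choose k : ℝ)) *
          ∑ ℓ ∈ range (k + 1), bernsteinBasis k ℓ x * bernsteinBasis k ℓ t := by
  have hpt : ∀ s : ℝ, durrmeyerKernel n x s * durrmeyerKernel m s t
      = ∑ a ∈ range (n + 1), ∑ b ∈ range (m + 1),
          (((n : ℝ) + 1) * ((m : ℝ) + 1) * (bernsteinBasis n a x * bernsteinBasis m b t)) *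
            (bernsteinBasis n a s * bernsteinBasis m b s) := by
    intro s
    simp only [durrmeyerKernel]
    rw [mul_mul_mul_comm, Finset.sum_mul_sum, Finset.mul_sum]
    refine Finset.sum_congr rfl fun a _ => ?_
    rw [Finset.mul_sum]
    exact Finset.sum_congr rfl fun b _ => by ring
  rw [intervalIntegral.integral_congr (fun s _ => hpt s)]
  rw [intervalIntegral.integral_finset_sum (fun a _ =>
    ((continuous_finset_sum _ fun b _ =>
      continuous_const.fun_mul ((bern_cont n a).fun_mul (bern_cont m b))).intervalIntegrable 0 1))]
  have hin : ∀ a ∈ range (n + 1),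
      (∫ s in (0:ℝ)..1, ∑ b ∈ range (m + 1),
        (((n : ℝ) + 1) * ((m : ℝ) + 1) * (bernsteinBasis n a x * bernsteinBasis m b t)) *
          (bernsteinBasis n a s * bernsteinBasis m b s))
      = ∑ b ∈ range (m + 1),
        (((n : ℝ) + 1) * ((m : ℝ) + 1) * (bernsteinBasis n a x * bernsteinBasis m b t)) *
          ((n.choose a : ℝ) * (m.choose b : ℝ) *
            (((a + b).factorial : ℝ) * (((n - a) + (m - b)).factorial : ℝ)
              / ((n + m + 1).factorial : ℝ))) := by
    intro a ha
    simp only [Finset.mem_range] at ha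
    rw [intervalIntegral.integral_finset_sum (fun b _ =>
      ((continuous_const.fun_mul ((bern_cont n a).fun_mul (bern_cont m b))).intervalIntegrable 0 1))]
    refine Finset.sum_congr rfl fun b hb => ?_
    simp only [Finset.mem_range] at hb
    rw [intervalIntegral.integral_const_mul, integral_bern_mul n m a b (by omega) (by omega)]
  rw [Finset.sum_congr rfl hin]
  -- now pure algebra: reorganize and apply `fold`
  have hterm : ∀ a ∈ range (n + 1), ∀ b ∈ range (m + 1),
      (((n : ℝ) + 1) * ((m : ℝ) + 1) * (bernsteinBasis n a x * bernsteinBasis m b t)) *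
        ((n.choose a : ℝ) * (m.choose b : ℝ) *
          (((a + b).factorial : ℝ) * (((n - a) + (m - b)).factorial : ℝ)
            / ((n + m + 1).factorial : ℝ)))
      = (((n+1).factorial : ℝ) * ((m+1).factorial : ℝ) / ((n+m+1).factorial : ℝ)) *
        (((n.choose a : ℝ) * ((a + b).choose a : ℝ)
            * ((((n - a) + (m - b)).choose (n - a) : ℕ) : ℝ))
          * (x ^ a * (1 - x) ^ (n - a)) * bernsteinBasis m b t) := by
    intro a ha b hb
    simp only [Finset.mem_range] at ha hb
    rw [keyR n m a b (by omega) (by omega)]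
    simp only [bernsteinBasis]
    push_cast [Nat.factorial_succ]
    ring
  rw [Finset.sum_congr rfl (fun a ha => Finset.sum_congr rfl (fun b hb => hterm a ha b hb))]
  rw [Finset.sum_comm]
  rw [← fold n m x t]
  rw [Finset.mul_sum]
  refine Finset.sum_congr rfl fun b _ => ?_
  rw [Finset.mul_sum]

lemma kernel_fold_right (n k : ℕ) (y x : ℝ) :
    ∑ ℓ ∈ range (k + 1),
      (∫ t in (0:ℝ)..1, bernsteinBasis k ℓ t * durrmeyerKernel n t y) * bernsteinBasis k ℓ x
    = (((n+1).factorial : ℝ) * (k.factorial : ℝ) / ((n+k+1).factorial : ℝ)) *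
        ∑ k' ∈ range (min n k + 1), ((n.choose k' : ℝ) * (k.choose k' : ℝ)) *
          ∑ ℓ' ∈ range (k' + 1), bernsteinBasis k' ℓ' y * bernsteinBasis k' ℓ' x := by
  have hint : ∀ ℓ ∈ range (k + 1),
      (∫ t in (0:ℝ)..1, bernsteinBasis k ℓ t * durrmeyerKernel n t y)
      = ∑ c ∈ range (n + 1),
          (((n : ℝ) + 1) * bernsteinBasis n c y) *
            ((n.choose c : ℝ) * (k.choose ℓ : ℝ) *
              (((c + ℓ).factorial : ℝ) * (((n - c) + (k - ℓ)).factorial : ℝ)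
                / ((n + k + 1).factorial : ℝ))) := by
    intro ℓ hℓ
    simp only [Finset.mem_range] at hℓ
    have hpt : ∀ t : ℝ, bernsteinBasis k ℓ t * durrmeyerKernel n t y
        = ∑ c ∈ range (n + 1),
            (((n : ℝ) + 1) * bernsteinBasis n c y) *
              (bernsteinBasis n c t * bernsteinBasis k ℓ t) := by
      intro t
      simp only [durrmeyerKernel]
      rw [mul_comm (bernsteinBasis k ℓ t), mul_assoc, Finset.sum_mul, Finset.mul_sum]
      exact Finset.sum_congr rfl fun c _ => by ring
    rw [intervalIntegral.integral_congr (fun t _ => hpt t)]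
    rw [intervalIntegral.integral_finset_sum (fun c _ =>
      ((continuous_const.fun_mul ((bern_cont n c).fun_mul (bern_cont k ℓ))).intervalIntegrable 0 1))]
    refine Finset.sum_congr rfl fun c hc => ?_
    simp only [Finset.mem_range] at hc
    rw [intervalIntegral.integral_const_mul, integral_bern_mul n k c ℓ (by omega) (by omega)]
  rw [Finset.sum_congr rfl (fun ℓ hℓ => congrArg (· * bernsteinBasis k ℓ x) (hint ℓ hℓ))]
  have hterm : ∀ ℓ ∈ range (k + 1), ∀ c ∈ range (n + 1),
      ((((n : ℝ) + 1) * bernsteinBasis n c y) *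
        ((n.choose c : ℝ) * (k.choose ℓ : ℝ) *
          (((c + ℓ).factorial : ℝ) * (((n - c) + (k - ℓ)).factorial : ℝ)
            / ((n + k + 1).factorial : ℝ)))) * bernsteinBasis k ℓ x
      = (((n+1).factorial : ℝ) * (k.factorial : ℝ) / ((n+k+1).factorial : ℝ)) *
        (((n.choose c : ℝ) * ((c + ℓ).choose c : ℝ)
            * ((((n - c) + (k - ℓ)).choose (n - c) : ℕ) : ℝ))
          * (y ^ c * (1 - y) ^ (n - c)) * bernsteinBasis k ℓ x) := by
    intro ℓ hℓ c hc
    simp only [Finset.mem_range] at hℓ hc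
    rw [keyR n k c ℓ (by omega) (by omega)]
    simp only [bernsteinBasis]
    push_cast [Nat.factorial_succ]
    ring
  calc ∑ ℓ ∈ range (k + 1), (∑ c ∈ range (n + 1),
        (((n : ℝ) + 1) * bernsteinBasis n c y) *
          ((n.choose c : ℝ) * (k.choose ℓ : ℝ) *
            (((c + ℓ).factorial : ℝ) * (((n - c) + (k - ℓ)).factorial : ℝ)
              / ((n + k + 1).factorial : ℝ)))) * bernsteinBasis k ℓ x
      = ∑ ℓ ∈ range (k + 1), ∑ c ∈ range (n + 1),
        (((n+1).factorial : ℝ) * (k.factorial : ℝ) / ((n+k+1).factorial : ℝ)) *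
          (((n.choose c : ℝ) * ((c + ℓ).choose c : ℝ)
              * ((((n - c) + (k - ℓ)).choose (n - c) : ℕ) : ℝ))
            * (y ^ c * (1 - y) ^ (n - c)) * bernsteinBasis k ℓ x) := by
        refine Finset.sum_congr rfl fun ℓ hℓ => ?_
        rw [Finset.sum_mul]
        exact Finset.sum_congr rfl fun c hc => hterm ℓ hℓ c hc
    _ = (((n+1).factorial : ℝ) * (k.factorial : ℝ) / ((n+k+1).factorial : ℝ)) *
        ∑ ℓ ∈ range (k + 1), ∑ c ∈ range (n + 1),
          (((n.choose c : ℝ) * ((c + ℓ).choose c : ℝ)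
              * ((((n - c) + (k - ℓ)).choose (n - c) : ℕ) : ℝ))
            * (y ^ c * (1 - y) ^ (n - c)) * bernsteinBasis k ℓ x) := by
        rw [Finset.mul_sum]
        refine Finset.sum_congr rfl fun ℓ _ => by rw [Finset.mul_sum]
    _ = (((n+1).factorial : ℝ) * (k.factorial : ℝ) / ((n+k+1).factorial : ℝ)) *
        ∑ k' ∈ range (min n k + 1), ((n.choose k' : ℝ) * (k.choose k' : ℝ)) *
          ∑ ℓ' ∈ range (k' + 1), bernsteinBasis k' ℓ' y * bernsteinBasis k' ℓ' x := by
        rw [fold n k y x]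
lemma keyR2 (n₃ n₁ k : ℕ) (hk : k ≤ n₃) :
    (n₃.choose k : ℝ) * ((k.factorial : ℝ) * ((n₁+1).factorial : ℝ) / ((n₁+k+1).factorial : ℝ))
    = ((n₃.factorial : ℝ) * ((n₁+1).factorial : ℝ) / ((n₃+n₁+1).factorial : ℝ)) *
        ((n₃+n₁+1).choose (n₃-k) : ℝ) := by
  rw [Nat.cast_choose ℝ hk, Nat.cast_choose ℝ (show n₃ - k ≤ n₃+n₁+1 by omega),
    show n₃+n₁+1 - (n₃-k) = n₁+k+1 by omega]
  have h1 : ((n₃-k).factorial : ℝ) ≠ 0 := Nat.cast_ne_zero.2 (Nat.factorial_ne_zero _)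
  have h2 : ((n₁+k+1).factorial : ℝ) ≠ 0 := Nat.cast_ne_zero.2 (Nat.factorial_ne_zero _)
  have h3 : ((n₃+n₁+1).factorial : ℝ) ≠ 0 := Nat.cast_ne_zero.2 (Nat.factorial_ne_zero _)
  have h4 : ((k).factorial : ℝ) ≠ 0 := Nat.cast_ne_zero.2 (Nat.factorial_ne_zero _)
  field_simp

lemma final_const (n₃ n₂ n₁ k' : ℕ) (h : k' ≤ min n₁ (min n₂ n₃)) :
    ((((n₃+1).factorial : ℝ) * ((n₂+1).factorial : ℝ) / ((n₃+n₂+1).factorial : ℝ)) *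
      (((n₃.factorial : ℝ) * ((n₁+1).factorial : ℝ) / ((n₃+n₁+1).factorial : ℝ)))) *
      (((n₂.choose k' : ℝ) * ((((n₂ - k') + (n₃+n₁+1)).choose (n₃ - k') : ℕ) : ℝ)) *
      (n₁.choose k' : ℝ))
    = (((n₃ + 1).factorial : ℝ) * ((n₂ + 1).factorial : ℝ) * ((n₁ + 1).factorial : ℝ) *
          ((n₃ + n₂ + n₁ + 1).factorial : ℝ) /
        (((n₃ + n₂ + 1).factorial : ℝ) * ((n₃ + n₁ + 1).factorial : ℝ) *
          ((n₂ + n₁ + 1).factorial : ℝ))) *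
      ((n₃.choose k' : ℝ) * (n₂.choose k' : ℝ) * (n₁.choose k' : ℝ) /
        ((n₃ + n₂ + n₁ + 1).choose k' : ℝ)) := by
  have hk1 : k' ≤ n₁ := by omega
  have hk2 : k' ≤ n₂ := by omega
  have hk3 : k' ≤ n₃ := by omega
  rw [show (n₂ - k') + (n₃+n₁+1) = (n₃+n₂+n₁+1) - k' by omega]
  rw [Nat.cast_choose ℝ hk1, Nat.cast_choose ℝ hk2, Nat.cast_choose ℝ hk3,
    Nat.cast_choose ℝ (show n₃ - k' ≤ n₃+n₂+n₁+1 - k' by omega),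
    Nat.cast_choose ℝ (show k' ≤ n₃+n₂+n₁+1 by omega),
    show (n₃+n₂+n₁+1 - k') - (n₃ - k') = n₂+n₁+1 by omega]
  have hne : ∀ j : ℕ, ((j.factorial : ℕ) : ℝ) ≠ 0 :=
    fun j => Nat.cast_ne_zero.2 (Nat.factorial_ne_zero _)
  field_simp

theorem durrmeyer_comp_three_kernel_repr (n₃ n₂ n₁ : ℕ) (x y : ℝ)
    (hx : x ∈ Set.Icc (0:ℝ) 1) (hy : y ∈ Set.Icc (0:ℝ) 1) :
    durrmeyerKernelComp3 n₃ n₂ n₁ x y =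
      (((n₃ + 1).factorial : ℝ) * ((n₂ + 1).factorial : ℝ) * ((n₁ + 1).factorial : ℝ) *
          ((n₃ + n₂ + n₁ + 1).factorial : ℝ) /
        (((n₃ + n₂ + 1).factorial : ℝ) * ((n₃ + n₁ + 1).factorial : ℝ) *
          ((n₂ + n₁ + 1).factorial : ℝ))) *
        ∑ k ∈ Finset.range (min n₁ (min n₂ n₃) + 1),
          ((n₃.choose k : ℝ) * (n₂.choose k : ℝ) * (n₁.choose k : ℝ) /
              ((n₃ + n₂ + n₁ + 1).choose k : ℝ)) *
            ∑ ℓ ∈ Finset.range (k + 1), bernsteinBasis k ℓ x * bernsteinBasis k ℓ y := by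
  unfold durrmeyerKernelComp3
  calc ∫ t in (0:ℝ)..1, ∫ s in (0:ℝ)..1,
      durrmeyerKernel n₃ x s * durrmeyerKernel n₂ s t * durrmeyerKernel n₁ t y
      = ∫ t in (0:ℝ)..1,
          (∫ s in (0:ℝ)..1, durrmeyerKernel n₃ x s * durrmeyerKernel n₂ s t)
            * durrmeyerKernel n₁ t y := by
        refine intervalIntegral.integral_congr fun t _ => ?_
        rw [← intervalIntegral.integral_mul_const]
    _ = ∫ t in (0:ℝ)..1,
          ∑ k ∈ range (min n₃ n₂ + 1), ∑ ℓ ∈ range (k + 1),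
            ((((n₃+1).factorial : ℝ) * ((n₂+1).factorial : ℝ) / ((n₃+n₂+1).factorial : ℝ)) *
              ((n₃.choose k : ℝ) * (n₂.choose k : ℝ)) * bernsteinBasis k ℓ x) *
              (bernsteinBasis k ℓ t * durrmeyerKernel n₁ t y) := by
        refine intervalIntegral.integral_congr fun t _ => ?_
        rw [kernel_two_fold n₃ n₂ x t]
        simp only [Finset.mul_sum, Finset.sum_mul]
        exact Finset.sum_congr rfl fun k _ => Finset.sum_congr rfl fun ℓ _ => by ring
    _ = ∑ k ∈ range (min n₃ n₂ + 1), ∑ ℓ ∈ range (k + 1),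
          ((((n₃+1).factorial : ℝ) * ((n₂+1).factorial : ℝ) / ((n₃+n₂+1).factorial : ℝ)) *
            ((n₃.choose k : ℝ) * (n₂.choose k : ℝ)) * bernsteinBasis k ℓ x) *
            (∫ t in (0:ℝ)..1, bernsteinBasis k ℓ t * durrmeyerKernel n₁ t y) := by
        rw [intervalIntegral.integral_finset_sum (fun k _ =>
          ((continuous_finset_sum _ fun ℓ _ => continuous_const.fun_mul
            ((bern_cont k ℓ).fun_mul (kern_cont_left n₁ y))).intervalIntegrable 0 1))]
        refine Finset.sum_congr rfl fun k _ => ?_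
        rw [intervalIntegral.integral_finset_sum (fun ℓ _ =>
          ((continuous_const.fun_mul
            ((bern_cont k ℓ).fun_mul (kern_cont_left n₁ y))).intervalIntegrable 0 1))]
        exact Finset.sum_congr rfl fun ℓ _ => intervalIntegral.integral_const_mul _ _
    _ = ∑ k ∈ range (min n₃ n₂ + 1),
          ((((n₃+1).factorial : ℝ) * ((n₂+1).factorial : ℝ) / ((n₃+n₂+1).factorial : ℝ)) *
            ((n₃.choose k : ℝ) * (n₂.choose k : ℝ))) *
          ∑ ℓ ∈ range (k + 1),
            (∫ t in (0:ℝ)..1, bernsteinBasis k ℓ t * durrmeyerKernel n₁ t y)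
              * bernsteinBasis k ℓ x := by
        refine Finset.sum_congr rfl fun k _ => ?_
        rw [Finset.mul_sum]
        refine Finset.sum_congr rfl fun ℓ _ => by ring
    _ = ∑ k ∈ range (min n₃ n₂ + 1),
          ((((n₃+1).factorial : ℝ) * ((n₂+1).factorial : ℝ) / ((n₃+n₂+1).factorial : ℝ)) *
            ((n₃.choose k : ℝ) * (n₂.choose k : ℝ))) *
          ((((n₁+1).factorial : ℝ) * (k.factorial : ℝ) / ((n₁+k+1).factorial : ℝ)) *
            ∑ k' ∈ range (min n₁ k + 1), ((n₁.choose k' : ℝ) * (k.choose k' : ℝ)) *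
              ∑ ℓ' ∈ range (k' + 1), bernsteinBasis k' ℓ' y * bernsteinBasis k' ℓ' x) := by
        refine Finset.sum_congr rfl fun k _ => ?_
        rw [kernel_fold_right n₁ k y x]
    _ = ∑ k ∈ range (min n₃ n₂ + 1), ∑ k' ∈ range (min n₁ (min n₂ n₃) + 1),
          ((((n₃+1).factorial : ℝ) * ((n₂+1).factorial : ℝ) / ((n₃+n₂+1).factorial : ℝ)) *
            ((n₃.choose k : ℝ) * (n₂.choose k : ℝ)) *
            ((((n₁+1).factorial : ℝ) * (k.factorial : ℝ) / ((n₁+k+1).factorial : ℝ)) *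
              (((n₁.choose k' : ℝ) * (k.choose k' : ℝ)) *
                ∑ ℓ' ∈ range (k' + 1),
                  bernsteinBasis k' ℓ' y * bernsteinBasis k' ℓ' x))) := by
        refine Finset.sum_congr rfl fun k hk => ?_
        simp only [Finset.mem_range] at hk
        rw [Finset.mul_sum, Finset.mul_sum]
        refine (Finset.sum_subset (show range (min n₁ k + 1)
            ⊆ range (min n₁ (min n₂ n₃) + 1) from fun t ht => by
          simp only [Finset.mem_range] at *; omega) fun t ht ht2 => ?_).trans
          (Finset.sum_congr rfl fun k' _ => by ring)
        simp only [Finset.mem_range] at ht ht2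
        rw [Nat.choose_eq_zero_of_lt (show k < t by omega)]
        push_cast
        ring
    _ = ∑ k' ∈ range (min n₁ (min n₂ n₃) + 1), ∑ k ∈ range (min n₃ n₂ + 1),
          ((((n₃+1).factorial : ℝ) * ((n₂+1).factorial : ℝ) / ((n₃+n₂+1).factorial : ℝ)) *
            ((n₃.choose k : ℝ) * (n₂.choose k : ℝ)) *
            ((((n₁+1).factorial : ℝ) * (k.factorial : ℝ) / ((n₁+k+1).factorial : ℝ)) *
              (((n₁.choose k' : ℝ) * (k.choose k' : ℝ)) *
                ∑ ℓ' ∈ range (k' + 1),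
                  bernsteinBasis k' ℓ' y * bernsteinBasis k' ℓ' x))) := Finset.sum_comm
    _ = ∑ k' ∈ range (min n₁ (min n₂ n₃) + 1),
          ((((n₃+1).factorial : ℝ) * ((n₂+1).factorial : ℝ) / ((n₃+n₂+1).factorial : ℝ)) *
            (((n₃.factorial : ℝ) * ((n₁+1).factorial : ℝ) / ((n₃+n₁+1).factorial : ℝ)))) *
          ((((∑ k ∈ range (min n₃ n₂ + 1),
              n₂.choose k * k.choose k' * (n₃+n₁+1).choose (n₃-k) : ℕ) : ℝ)) *
            ((n₁.choose k' : ℝ) *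
              ∑ ℓ' ∈ range (k' + 1), bernsteinBasis k' ℓ' y * bernsteinBasis k' ℓ' x)) := by
        refine Finset.sum_congr rfl fun k' _ => ?_
        push_cast
        rw [Finset.sum_mul, Finset.mul_sum]
        refine Finset.sum_congr rfl fun k hk => ?_
        simp only [Finset.mem_range] at hk
        have e := keyR2 n₃ n₁ k (by omega)
        calc ((((n₃+1).factorial : ℝ) * ((n₂+1).factorial : ℝ) / ((n₃+n₂+1).factorial : ℝ)) *
              ((n₃.choose k : ℝ) * (n₂.choose k : ℝ)) *
              ((((n₁+1).factorial : ℝ) * (k.factorial : ℝ) / ((n₁+k+1).factorial : ℝ)) *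
                (((n₁.choose k' : ℝ) * (k.choose k' : ℝ)) *
                  ∑ ℓ' ∈ range (k' + 1),
                    bernsteinBasis k' ℓ' y * bernsteinBasis k' ℓ' x)))
            = ((((n₃+1).factorial : ℝ) * ((n₂+1).factorial : ℝ) / ((n₃+n₂+1).factorial : ℝ)) *
              ((n₃.choose k : ℝ) *
                ((k.factorial : ℝ) * ((n₁+1).factorial : ℝ) / ((n₁+k+1).factorial : ℝ))) *
              ((n₂.choose k : ℝ) * (k.choose k' : ℝ) *
                ((n₁.choose k' : ℝ) *
                  ∑ ℓ' ∈ range (k' + 1),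
                    bernsteinBasis k' ℓ' y * bernsteinBasis k' ℓ' x))) := by ring
          _ = ((((n₃+1).factorial : ℝ) * ((n₂+1).factorial : ℝ) / ((n₃+n₂+1).factorial : ℝ)) *
              (((n₃.factorial : ℝ) * ((n₁+1).factorial : ℝ) / ((n₃+n₁+1).factorial : ℝ)) *
                ((n₃+n₁+1).choose (n₃-k) : ℝ)) *
              ((n₂.choose k : ℝ) * (k.choose k' : ℝ) *
                ((n₁.choose k' : ℝ) *
                  ∑ ℓ' ∈ range (k' + 1),
                    bernsteinBasis k' ℓ' y * bernsteinBasis k' ℓ' x))) := by rw [e]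
          _ = ((((n₃+1).factorial : ℝ) * ((n₂+1).factorial : ℝ) / ((n₃+n₂+1).factorial : ℝ)) *
              (((n₃.factorial : ℝ) * ((n₁+1).factorial : ℝ) / ((n₃+n₁+1).factorial : ℝ)))) *
              (((n₂.choose k : ℝ) * (k.choose k' : ℝ) * ((n₃+n₁+1).choose (n₃-k) : ℝ)) *
                ((n₁.choose k' : ℝ) *
                  ∑ ℓ' ∈ range (k' + 1),
                    bernsteinBasis k' ℓ' y * bernsteinBasis k' ℓ' x)) := by ring
    _ = ∑ k' ∈ range (min n₁ (min n₂ n₃) + 1),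
          (((n₃ + 1).factorial : ℝ) * ((n₂ + 1).factorial : ℝ) * ((n₁ + 1).factorial : ℝ) *
              ((n₃ + n₂ + n₁ + 1).factorial : ℝ) /
            (((n₃ + n₂ + 1).factorial : ℝ) * ((n₃ + n₁ + 1).factorial : ℝ) *
              ((n₂ + n₁ + 1).factorial : ℝ))) *
          (((n₃.choose k' : ℝ) * (n₂.choose k' : ℝ) * (n₁.choose k' : ℝ) /
              ((n₃ + n₂ + n₁ + 1).choose k' : ℝ)) *
            ∑ ℓ ∈ range (k' + 1), bernsteinBasis k' ℓ x * bernsteinBasis k' ℓ y) := by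
        refine Finset.sum_congr rfl fun k' hk' => ?_
        simp only [Finset.mem_range] at hk'
        rw [idS n₃ n₂ n₁ k' (by omega)]
        have hfc := final_const n₃ n₂ n₁ k' (by omega)
        have hsym : ∑ ℓ' ∈ range (k' + 1), bernsteinBasis k' ℓ' y * bernsteinBasis k' ℓ' x
            = ∑ ℓ ∈ range (k' + 1), bernsteinBasis k' ℓ x * bernsteinBasis k' ℓ y :=
          Finset.sum_congr rfl fun ℓ _ => by ring
        push_cast
        push_cast at hfc
        rw [hsym]
        calc ((((n₃+1).factorial : ℝ) * ((n₂+1).factorial : ℝ) / ((n₃+n₂+1).factorial : ℝ)) *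
              (((n₃.factorial : ℝ) * ((n₁+1).factorial : ℝ) / ((n₃+n₁+1).factorial : ℝ)))) *
            (((n₂.choose k' : ℝ) * ((((n₂ - k') + (n₃+n₁+1)).choose (n₃ - k') : ℕ) : ℝ)) *
              ((n₁.choose k' : ℝ) *
                ∑ ℓ ∈ range (k' + 1), bernsteinBasis k' ℓ x * bernsteinBasis k' ℓ y))
            = (((((n₃+1).factorial : ℝ) * ((n₂+1).factorial : ℝ) / ((n₃+n₂+1).factorial : ℝ)) *
              (((n₃.factorial : ℝ) * ((n₁+1).factorial : ℝ) / ((n₃+n₁+1).factorial : ℝ)))) *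
            (((n₂.choose k' : ℝ) * ((((n₂ - k') + (n₃+n₁+1)).choose (n₃ - k') : ℕ) : ℝ)) *
              (n₁.choose k' : ℝ))) *
              (∑ ℓ ∈ range (k' + 1), bernsteinBasis k' ℓ x * bernsteinBasis k' ℓ y) := by ring
          _ = _ := by rw [hfc]; ring
    _ = (((n₃ + 1).factorial : ℝ) * ((n₂ + 1).factorial : ℝ) * ((n₁ + 1).factorial : ℝ) *
            ((n₃ + n₂ + n₁ + 1).factorial : ℝ) /
          (((n₃ + n₂ + 1).factorial : ℝ) * ((n₃ + n₁ + 1).factorial : ℝ) *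
            ((n₂ + n₁ + 1).factorial : ℝ))) *
        ∑ k ∈ Finset.range (min n₁ (min n₂ n₃) + 1),
          ((n₃.choose k : ℝ) * (n₂.choose k : ℝ) * (n₁.choose k : ℝ) /
              ((n₃ + n₂ + n₁ + 1).choose k : ℝ)) *
            ∑ ℓ ∈ Finset.range (k + 1), bernsteinBasis k ℓ x * bernsteinBasis k ℓ y := by
        rw [Finset.mul_sum]
end

section
/- Let n ∈ ℕ, β ∈ ℕ_0^{d+1} a multi-index, and y = (y_0,y_1,…,y_d) ∈ ℝ^{d+1} with y_0+y_1+⋯+y_d = 1. Then Σ_{|α|=n} B_α(y) · ((α+β)!/α!) = Σ_{ℓ ≤ β} n^{|ℓ|↓} · (1/|ℓ|!) · B_ℓ(y) · β! · Π_{ν=0}^{d} C(β_ν, ℓ_ν), where the left sum runs over all α ∈ ℕ_0^{d+1} with |α| = n, the right sum runs over all ℓ ∈ ℕ_0^{d+1} with ℓ_ν ≤ β_ν for each ν, γ! := γ_0!⋯γ_d!, and n^{k↓} := n(n−1)⋯(n−k+1) is the falling factorial. -/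
open MeasureTheory

section Aux
open Finset

lemma multinom_sum (d N : ℕ) (y : Fin (d + 1) → ℝ) (hy : ∑ i, y i = 1) :
    ∑ m ∈ Finset.Nat.antidiagonalTuple (d + 1) N,
      ((N.factorial : ℝ) / ∏ i, ((m i).factorial : ℝ)) * ∏ i, y i ^ m i = 1 := by
  have h := Finset.sum_pow_eq_sum_piAntidiag (Finset.univ : Finset (Fin (d+1))) y N
  rw [hy, one_pow, Finset.piAntidiag_univ_fin_eq_antidiagonalTuple] at h
  rw [h]
  refine Finset.sum_congr rfl fun m hm => ?_
  have hsum : ∑ i, m i = N := Finset.Nat.mem_antidiagonalTuple.mp hm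
  have hspec := Nat.multinomial_spec Finset.univ m
  rw [hsum] at hspec
  have hne : (∏ i, ((m i).factorial : ℝ)) ≠ 0 := by positivity
  have : ((Nat.multinomial Finset.univ m : ℝ)) = (N.factorial : ℝ) / ∏ i, ((m i).factorial : ℝ) := by
    rw [eq_div_iff hne, mul_comm]
    exact_mod_cast congrArg (Nat.cast (R := ℝ)) hspec
  rw [this]

lemma innerSumAux (d n : ℕ) (y : Fin (d + 1) → ℝ) (hy : ∑ i, y i = 1) (ℓ : Fin (d + 1) → ℕ) :
    ∑ α ∈ Finset.Nat.antidiagonalTuple (d + 1) n,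
      ((n.factorial : ℝ) / ∏ i, ((α i).factorial : ℝ)) * (∏ i, y i ^ α i) *
        ∏ i, ((α i).choose (ℓ i) : ℝ)
    = (n.descFactorial (∑ i, ℓ i) : ℝ) / (∏ i, ((ℓ i).factorial : ℝ)) * ∏ i, y i ^ ℓ i := by
  set L := ∑ i, ℓ i with hL
  classical
  by_cases hLn : L ≤ n
  · -- restrict to α ≥ ℓ
    rw [← Finset.sum_filter_of_ne (p := fun α => ℓ ≤ α) ?hzero]
    case hzero =>
      intro α _ hne
      by_contra hle
      apply hne
      simp only [Pi.le_def, not_forall, not_le] at hle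
      obtain ⟨i, hi⟩ := hle
      have : (α i).choose (ℓ i) = 0 := Nat.choose_eq_zero_of_lt (by omega)
      have : (∏ i, ((α i).choose (ℓ i) : ℝ)) = 0 :=
        Finset.prod_eq_zero (Finset.mem_univ i) (by exact_mod_cast this)
      rw [this, mul_zero]
    rw [Finset.sum_nbij' (i := fun α => α - ℓ) (j := fun m => ℓ + m)
      (t := Finset.Nat.antidiagonalTuple (d + 1) (n - L))
      (g := fun m => ((n.factorial : ℝ) / ∏ i, (((ℓ + m) i).factorial : ℝ)) *
        (∏ i, y i ^ (ℓ + m) i) * ∏ i, (((ℓ + m) i).choose (ℓ i) : ℝ)) ?hi ?hj ?hji ?hij ?heq]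
    case hi =>
      intro α hα
      simp only [Finset.mem_filter, Finset.Nat.mem_antidiagonalTuple] at hα ⊢
      obtain ⟨hs, hle⟩ := hα
      have : ∀ i, (α - ℓ) i = α i - ℓ i := fun i => rfl
      rw [Finset.sum_congr rfl fun i _ => this i]
      have : ∑ i, (α i - ℓ i) = ∑ i, α i - ∑ i, ℓ i := by
        rw [eq_tsub_iff_add_eq_of_le, ← Finset.sum_add_distrib]
        · exact Finset.sum_congr rfl fun i _ => Nat.sub_add_cancel (hle i)
        · exact Finset.sum_le_sum fun i _ => hle i
      rw [this, hs]
    case hj =>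
      intro m hm
      simp only [Finset.Nat.mem_antidiagonalTuple] at hm
      simp only [Finset.mem_filter, Finset.Nat.mem_antidiagonalTuple]
      constructor
      · have : ∀ i, (ℓ + m) i = ℓ i + m i := fun i => rfl
        rw [Finset.sum_congr rfl fun i _ => this i, Finset.sum_add_distrib, hm, ← hL]
        omega
      · exact fun i => Nat.le_add_right _ _
    case hji =>
      intro α hα
      simp only [Finset.mem_filter] at hα
      funext i
      exact Nat.add_sub_cancel' (hα.2 i)
    case hij =>
      intro m _
      funext i
      exact Nat.add_sub_cancel_left _ _
    case heq =>
      intro α hα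
      simp only [Finset.mem_filter] at hα
      have h : ℓ + (α - ℓ) = α := funext fun i => Nat.add_sub_cancel' (hα.2 i)
      rw [h]
    -- now compute the sum over m
    have key : ∀ m : Fin (d+1) → ℕ,
        ((n.factorial : ℝ) / ∏ i, (((ℓ + m) i).factorial : ℝ)) * (∏ i, y i ^ (ℓ + m) i) *
          ∏ i, (((ℓ + m) i).choose (ℓ i) : ℝ)
        = ((n.factorial : ℝ) / ((n - L).factorial : ℝ)) / (∏ i, ((ℓ i).factorial : ℝ)) *
            (∏ i, y i ^ ℓ i) *
            ((((n - L).factorial : ℝ) / ∏ i, ((m i).factorial : ℝ)) * ∏ i, y i ^ m i) := by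
      intro m
      have hch : ∀ i, (((ℓ i + m i).choose (ℓ i) : ℝ)) =
          ((ℓ i + m i).factorial : ℝ) / (((ℓ i).factorial : ℝ) * ((m i).factorial : ℝ)) := by
        intro i
        have := Nat.add_choose_mul_factorial_mul_factorial (ℓ i) (m i)
        have h2 : (((ℓ i + m i).choose (m i) : ℝ)) * ((ℓ i).factorial : ℝ) * ((m i).factorial : ℝ)
            = ((ℓ i + m i).factorial : ℝ) := by exact_mod_cast congrArg (Nat.cast (R := ℝ)) this
        rw [Nat.choose_symm_add]
        field_simp at h2 ⊢
        linarith [h2]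
      simp only [Pi.add_apply]
      rw [Finset.prod_congr rfl fun i _ => hch i]
      rw [Finset.prod_div_distrib, Finset.prod_mul_distrib]
      have hpy : ∀ i, y i ^ (ℓ i + m i) = y i ^ ℓ i * y i ^ m i := fun i => pow_add _ _ _
      rw [Finset.prod_congr rfl fun i _ => hpy i, Finset.prod_mul_distrib]
      have h1 : (∏ i, ((ℓ i + m i).factorial : ℝ)) ≠ 0 := by positivity
      have h2 : (∏ i, ((ℓ i).factorial : ℝ)) ≠ 0 := by positivity
      have h3 : (∏ i, ((m i).factorial : ℝ)) ≠ 0 := by positivity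
      have h4 : ((n - L).factorial : ℝ) ≠ 0 := by positivity
      field_simp
    rw [Finset.sum_congr rfl fun m _ => key m, ← Finset.mul_sum,
      multinom_sum d (n - L) y hy, mul_one]
    have hdf : ((n.descFactorial L : ℝ)) = (n.factorial : ℝ) / ((n - L).factorial : ℝ) := by
      have := Nat.factorial_mul_descFactorial hLn
      have h4 : ((n - L).factorial : ℝ) ≠ 0 := by positivity
      rw [eq_div_iff h4, mul_comm]
      exact_mod_cast congrArg (Nat.cast (R := ℝ)) this
    rw [hdf, div_div]
  · -- L > n : both sides zero
    push_neg at hLn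
    have hdf : n.descFactorial L = 0 := Nat.descFactorial_eq_zero_iff_lt.mpr hLn
    rw [hdf]
    push_cast
    rw [zero_div, zero_mul]
    refine Finset.sum_eq_zero fun α hα => ?_
    have hs : ∑ i, α i = n := Finset.Nat.mem_antidiagonalTuple.mp hα
    have : ∃ i, α i < ℓ i := by
      by_contra h
      push_neg at h
      have : L ≤ ∑ i, α i := Finset.sum_le_sum fun i _ => h i
      omega
    obtain ⟨i, hi⟩ := this
    have hz : ((α i).choose (ℓ i) : ℝ) = 0 := by
      exact_mod_cast congrArg (Nat.cast (R := ℝ)) (Nat.choose_eq_zero_of_lt hi)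
    exact mul_eq_zero_of_right _ (Finset.prod_eq_zero (Finset.mem_univ i) hz)

lemma vanderIic (a b : ℕ) : ((a + b).choose b : ℕ) = ∑ l ∈ Finset.Iic b, a.choose l * b.choose l := by
  rw [Nat.add_choose_eq, Nat.sum_antidiagonal_eq_sum_range_succ_mk]
  rw [show Finset.range (b + 1) = Finset.Iic b by ext x; simp [Nat.lt_succ_iff]]
  refine Finset.sum_congr rfl fun l hl => ?_
  rw [Nat.choose_symm (Finset.mem_Iic.mp hl)]

end Aux

/-- The homogeneous `d`-variate Bernstein basis polynomial `B_γ` evaluated at a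
barycentric vector `y ∈ ℝ^{d+1}`. -/
noncomputable def bernsteinHom (d : ℕ) (γ : Fin (d + 1) → ℕ) (y : Fin (d + 1) → ℝ) : ℝ :=
  (((∑ i, γ i).factorial : ℝ) / ∏ i, ((γ i).factorial : ℝ)) * ∏ i, y i ^ γ i

theorem sum_bernsteinHom_factorial_ratio (d : ℕ) (n : ℕ) (hn : 0 < n)
    (β : Fin (d + 1) → ℕ) (y : Fin (d + 1) → ℝ) (hy : ∑ i, y i = 1) :
    ∑ α ∈ Finset.Nat.antidiagonalTuple (d + 1) n,
        bernsteinHom d α y *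
          ((∏ i, ((α i + β i).factorial : ℝ)) / ∏ i, ((α i).factorial : ℝ)) =
      ∑ ℓ ∈ Finset.Iic β,
        (n.descFactorial (∑ i, ℓ i) : ℝ) * (1 / ((∑ i, ℓ i).factorial : ℝ)) *
          bernsteinHom d ℓ y * (∏ i, ((β i).factorial : ℝ)) *
          ∏ i, ((β i).choose (ℓ i) : ℝ) := by
  classical
  have hIic : (Finset.Iic β) = Fintype.piFinset fun i => Finset.Iic (β i) := by
    ext x; simp [Pi.le_def]
  have step1 : ∀ α ∈ Finset.Nat.antidiagonalTuple (d + 1) n,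
      bernsteinHom d α y * ((∏ i, ((α i + β i).factorial : ℝ)) / ∏ i, ((α i).factorial : ℝ))
      = ∑ ℓ ∈ Finset.Iic β,
          (((n.factorial : ℝ) / ∏ i, ((α i).factorial : ℝ)) * (∏ i, y i ^ α i) *
            ∏ i, ((α i).choose (ℓ i) : ℝ)) *
          ((∏ i, ((β i).factorial : ℝ)) * ∏ i, ((β i).choose (ℓ i) : ℝ)) := by
    intro α hα
    have hs : ∑ i, α i = n := Finset.Nat.mem_antidiagonalTuple.mp hα
    have hfac : (∏ i, ((α i + β i).factorial : ℝ))
        = (∏ i, (((α i + β i).choose (β i) : ℝ))) * (∏ i, ((α i).factorial : ℝ)) *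
          (∏ i, ((β i).factorial : ℝ)) := by
      rw [← Finset.prod_mul_distrib, ← Finset.prod_mul_distrib]
      refine Finset.prod_congr rfl fun i _ => ?_
      exact_mod_cast (congrArg (Nat.cast (R := ℝ))
        (Nat.add_choose_mul_factorial_mul_factorial (α i) (β i))).symm
    have hchoose : ∀ i : Fin (d + 1), (((α i + β i).choose (β i) : ℝ))
        = ∑ l ∈ Finset.Iic (β i), ((α i).choose l : ℝ) * ((β i).choose l : ℝ) := by
      intro i
      have := vanderIic (α i) (β i)
      push_cast [this]
      rfl
    have hprod : (∏ i, (((α i + β i).choose (β i) : ℝ)))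
        = ∑ ℓ ∈ Finset.Iic β, ∏ i, (((α i).choose (ℓ i) : ℝ) * ((β i).choose (ℓ i) : ℝ)) := by
      rw [Finset.prod_congr rfl fun i _ => hchoose i, Finset.prod_univ_sum, hIic]
    unfold bernsteinHom
    rw [hs, hfac, hprod, Finset.sum_mul, Finset.sum_mul, Finset.sum_div, Finset.mul_sum]
    have hαne : (∏ i, ((α i).factorial : ℝ)) ≠ 0 := by positivity
    apply Finset.sum_congr rfl
    intro ℓ _
    rw [Finset.prod_mul_distrib]
    field_simp
  rw [Finset.sum_congr rfl step1, Finset.sum_comm]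
  refine Finset.sum_congr rfl fun ℓ hℓ => ?_
  rw [← Finset.sum_mul, innerSumAux d n y hy ℓ]
  unfold bernsteinHom
  have h1 : ((∑ i, ℓ i).factorial : ℝ) ≠ 0 := by positivity
  have h2 : (∏ i, ((ℓ i).factorial : ℝ)) ≠ 0 := by positivity
  field_simp
end
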